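/- arXiv:2512.08468 — 11 statements merged into one kernel-verified Lean document; each statement's English description precedes it below -/
import Mathlib

section
/- For every a ∈ O, one has a² ∈ Q. -/
/-!
Fix `u ∈ I` nonzero. For `a ∈ O \ Q`, approximate `a` by `q ∈ Q` so closely that
`y := (a - q) / u` lies in `O` and satisfies `v y + w y > 0`; this is possible because
`w` is invariant under translation by `Q` and `w (a - q) = w y + v u`. Then `y² ∈ R`, so
`y² u ∈ I ⊆ Q` and `(a - q)² = (y² u) u ∈ Q`. In characteristic 2,
`a² = (a - q)² + q² ∈ Q`.
-/

theorem WithTop.eq_coe_sub_of_add_coe_eq_coe {Γ : Type*} [AddCommGroup Γ] {z : WithTop Γ}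
    {γ δ : Γ} (h : z + δ = γ) : z = ↑(γ - δ) := by
  obtain ⟨z', δ', rfl, hδ', rfl⟩ := WithTop.add_eq_coe.1 h
  rw [WithTop.coe_eq_coe.1 hδ', add_sub_cancel_right]

section

variable {K : Type*} [Field K] {Γ : Type*} [AddCommGroup Γ] [LinearOrder Γ]
  {v w : K → WithTop Γ} {O Q R : Subring K} {I : Set K}

theorem w_mul_eq_of_mul_notMem
    (hw_mul_pos : ∀ a ∈ O, ∀ q ∈ Q, 0 < w a + v q → a * q ∈ Q)
    (hw_mul : ∀ a ∈ O, ∀ q ∈ Q, ¬ 0 < w a + v q → w (a * q) = w a + v q)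
    {y u : K} (hy : y ∈ O) (hu : u ∈ Q) (hyu : y * u ∉ Q) :
    w (y * u) = w y + v u :=
  hw_mul y hy u hu fun h => hyu (hw_mul_pos y hy u hu h)

theorem mul_sq_mem_of_pos (hw_sq : ∀ a ∈ O, 0 < v a + w a → a ^ 2 ∈ R)
    (hIQ : I ⊆ (Q : Set K)) (hImul : ∀ r ∈ R, ∀ x ∈ I, r * x ∈ I)
    {y u : K} (hy : y ∈ O) (hvw : 0 < v y + w y) (hu : u ∈ I) : (y * u) ^ 2 ∈ Q := by
  have hy2u : y ^ 2 * u ∈ Q := hIQ (hImul _ (hw_sq y hy hvw) u hu)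
  rw [mul_pow, sq u, ← mul_assoc]
  exact Q.mul_mem hy2u (hIQ hu)

theorem exists_sub_eq_mul_of_pos [IsOrderedAddMonoid Γ]
    (v_mul : ∀ x y : K, v (x * y) = v x + v y)
    (hO : ∀ x : K, x ∈ O ↔ 0 ≤ v x)
    (hdense : ∀ a ∈ O, ∀ γ : Γ, ∃ q ∈ Q, (γ : WithTop Γ) < v (a - q))
    (hw_shift : ∀ q ∈ Q, ∀ a ∈ O, w (q + a) = w a)
    (hw_mul_pos : ∀ a ∈ O, ∀ q ∈ Q, 0 < w a + v q → a * q ∈ Q)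
    (hw_mul : ∀ a ∈ O, ∀ q ∈ Q, ¬ 0 < w a + v q → w (a * q) = w a + v q)
    {a u : K} {γ δ : Γ} (ha : a ∈ O) (haQ : a ∉ Q) (hwa : w a = γ)
    (hu : u ∈ Q) (hu0 : u ≠ 0) (hvu : v u = δ) :
    ∃ q ∈ Q, ∃ y ∈ O, a - q = y * u ∧ 0 < v y + w y := by
  -- `v y > m` yields `y ∈ O` and, since `w y` will turn out to be `γ - δ`, also `v y + w y > 0`
  set m := max 0 (δ - γ)
  obtain ⟨q, hq, hvq⟩ := hdense a ha (m + δ)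
  set y := (a - q) * u⁻¹
  have hyu : y * u = a - q := inv_mul_cancel_right₀ hu0 _
  have hvy : (m : WithTop Γ) < v y := by
    rwa [← hyu, v_mul, hvu, WithTop.coe_add, WithTop.add_lt_add_iff_right WithTop.coe_ne_top]
      at hvq
  have hy : y ∈ O := (hO y).2 ((WithTop.coe_le_coe.2 (le_max_left _ _)).trans hvy.le)
  have hwy : w y = ↑(γ - δ) := by
    have hnotMem : y * u ∉ Q := by
      rw [hyu]
      exact fun h => haQ (by simpa using Q.add_mem h hq)
    have hshift : w (a - q) = w a := by
      simpa [neg_add_eq_sub] using hw_shift (-q) (Q.neg_mem hq) a ha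
    refine WithTop.eq_coe_sub_of_add_coe_eq_coe ?_
    rw [← hvu, ← w_mul_eq_of_mul_notMem hw_mul_pos hw_mul hy hu hnotMem, hyu, hshift, hwa]
  refine ⟨q, hq, y, hy, hyu.symm, ?_⟩
  calc (0 : WithTop Γ) = ((δ - γ + (γ - δ) : Γ) : WithTop Γ) := by
        rw [sub_add_sub_cancel, sub_self, WithTop.coe_zero]
    _ ≤ (m : WithTop Γ) + ↑(γ - δ) := by
        rw [WithTop.coe_add]
        gcongr
        exact WithTop.coe_le_coe.2 (le_max_right 0 _)
    _ < v y + w y := by rw [hwy]; exact WithTop.add_lt_add_right WithTop.coe_ne_top hvy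

end

theorem square_mem_Q_of_mem_O_general
    {K : Type*} [Field K] [CharP K 2]
    {Γ : Type*} [AddCommGroup Γ] [LinearOrder Γ] [IsOrderedAddMonoid Γ]
    (v : K → WithTop Γ)
    (v_eq_top_iff : ∀ x : K, v x = ⊤ ↔ x = 0)
    (v_mul : ∀ x y : K, v (x * y) = v x + v y)
    (O Q R : Subring K)
    (hO : ∀ x : K, x ∈ O ↔ 0 ≤ v x)
    (I : Set K)
    (hIne : ∃ u ∈ I, u ≠ (0 : K))
    (hIQ : I ⊆ (Q : Set K))
    (hImul : ∀ r ∈ R, ∀ x ∈ I, r * x ∈ I)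
    (hdense : ∀ a ∈ O, ∀ γ : Γ, ∃ q ∈ Q, (γ : WithTop Γ) < v (a - q))
    (w : K → WithTop Γ)
    (hw_top : ∀ a ∈ O, (w a = ⊤ ↔ a ∈ Q))
    (hw_shift : ∀ q ∈ Q, ∀ a ∈ O, w (q + a) = w a)
    (hw_mul_pos : ∀ a ∈ O, ∀ q ∈ Q, 0 < w a + v q → a * q ∈ Q)
    (hw_mul : ∀ a ∈ O, ∀ q ∈ Q, ¬ 0 < w a + v q → w (a * q) = w a + v q)
    (hw_sq : ∀ a ∈ O, 0 < v a + w a → a ^ 2 ∈ R) :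
    ∀ a ∈ O, a ^ 2 ∈ Q := by
  intro a ha
  by_cases haQ : a ∈ Q
  · exact pow_mem haQ 2
  obtain ⟨u, huI, hu0⟩ := hIne
  obtain ⟨δ, hvu⟩ := WithTop.ne_top_iff_exists.1 ((v_eq_top_iff u).not.2 hu0)
  obtain ⟨γ, hwa⟩ := WithTop.ne_top_iff_exists.1 ((hw_top a ha).not.2 haQ)
  obtain ⟨q, hq, y, hy, hay, hvw⟩ := exists_sub_eq_mul_of_pos v_mul hO hdense hw_shift
    hw_mul_pos hw_mul ha haQ hwa.symm (hIQ huI) hu0 hvu.symm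
  have hsub : (a - q) ^ 2 ∈ Q := hay ▸ mul_sq_mem_of_pos hw_sq hIQ hImul hy hvw huI
  rw [← sub_add_cancel a q, CharTwo.add_sq]
  exact Q.add_mem hsub (pow_mem hq 2)

/-- Let `K` be a field of characteristic 2 with a valuation
`v : K → Γ ∪ {∞}` onto a linearly ordered abelian group `Γ`, valuation ring
`O = {x : v x ≥ 0}` and maximal ideal `M = {x : v x > 0}`.  Let `Q ⊆ R ⊆ O` be
subrings and `I` an ideal of `R` with `I ≠ 0` and `I ⊆ Q ∩ M`.  Assume `Q` is
dense in `O`, and assume there is a function `w : O → Γ ∪ {∞}` with: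
`w a = ∞ ↔ a ∈ Q`; `w (q + a) = w a` for `q ∈ Q`, `a ∈ O`; for `a ∈ O`, `q ∈ Q`,
if `w a + v q > 0` then `a q ∈ Q` and otherwise `w (a q) = w a + v q`; and
`a² ∈ R` whenever `a ∈ O` satisfies `v a + w a > 0`.
Then `a² ∈ Q` for every `a ∈ O`. -/
theorem square_mem_Q_of_mem_O
    {K : Type*} [Field K] [CharP K 2]
    {Γ : Type*} [AddCommGroup Γ] [LinearOrder Γ] [IsOrderedAddMonoid Γ]
    (v : K → WithTop Γ)
    (v_surj : ∀ γ : Γ, ∃ x : K, v x = (γ : WithTop Γ))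
    (v_eq_top_iff : ∀ x : K, v x = ⊤ ↔ x = 0)
    (v_mul : ∀ x y : K, v (x * y) = v x + v y)
    (v_add : ∀ x y : K, min (v x) (v y) ≤ v (x + y))
    (O Q R : Subring K)
    (hO : ∀ x : K, x ∈ O ↔ 0 ≤ v x)
    (hQR : (Q : Set K) ⊆ (R : Set K)) (hRO : (R : Set K) ⊆ (O : Set K))
    (I : Set K)
    (hIne : ∃ u ∈ I, u ≠ (0 : K))
    (hIQ : I ⊆ (Q : Set K)) (hIM : ∀ x ∈ I, 0 < v x)
    (hIzero : (0 : K) ∈ I)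
    (hIadd : ∀ x ∈ I, ∀ y ∈ I, x + y ∈ I)
    (hImul : ∀ r ∈ R, ∀ x ∈ I, r * x ∈ I)
    (hdense : ∀ a ∈ O, ∀ γ : Γ, ∃ q ∈ Q, (γ : WithTop Γ) < v (a - q))
    (w : K → WithTop Γ)
    (hw_top : ∀ a ∈ O, (w a = ⊤ ↔ a ∈ Q))
    (hw_shift : ∀ q ∈ Q, ∀ a ∈ O, w (q + a) = w a)
    (hw_mul_pos : ∀ a ∈ O, ∀ q ∈ Q, 0 < w a + v q → a * q ∈ Q)
    (hw_mul : ∀ a ∈ O, ∀ q ∈ Q, ¬ 0 < w a + v q → w (a * q) = w a + v q)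
    (hw_sq : ∀ a ∈ O, 0 < v a + w a → a ^ 2 ∈ R) :
    ∀ a ∈ O, a ^ 2 ∈ Q :=
  square_mem_Q_of_mem_O_general v v_eq_top_iff v_mul O Q R hO I hIne hIQ hImul hdense w hw_top
    hw_shift hw_mul_pos hw_mul hw_sq
end

section
/- If in addition Q ≠ O, then K is not perfect: the Frobenius map x ↦ x² on K is not surjective. -/
/-!
If Frobenius were surjective, every `x ∈ O` would be a square `d²` with `d ∈ O`; moving `d` by an
element `q ∈ Q` close to it keeps `w d` and makes `v (d - q) + w (d - q) > 0`, so
`x = (d - q)² + q² ∈ R`. Thus `O = R`, and `O · I ⊆ I ⊆ Q`.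

On the other hand `w` is unbounded below on `O` once `Q ≠ O`: for `b ∈ O \ Q` and `q ∈ Q` of large
valuation `γ`, after moving `b` so that `v b > γ`, the quotient `a = b / q` lies in `O` and
`w a = w b - γ`. Taking `w a ≤ -v u` for some nonzero `u ∈ I` gives `a u ∉ Q`, a contradiction.
-/

lemma val_eq_of_val_lt_val_add {R Λ : Type*} [Ring R] [CharP R 2] [LinearOrder Λ] (v : R → Λ)
    (v_add : ∀ x y : R, min (v x) (v y) ≤ v (x + y)) {x y : R} (h : v x < v (x + y)) :
    v y = v x := by
  have hx : v x = v (y + (x + y)) := by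
    rw [add_comm x y, ← add_assoc, CharTwo.add_self_eq_zero, zero_add]
  have hy : v y = v (x + (x + y)) := by
    rw [← add_assoc, CharTwo.add_self_eq_zero, zero_add]
  refine le_antisymm (not_lt.1 fun hlt => ?_) ?_
  · exact (lt_min hlt h).not_ge (hx ▸ v_add _ _)
  · exact hy ▸ (le_min le_rfl h.le).trans (v_add _ _)

lemma val_nonneg_of_val_sq_nonneg {K Γ : Type*} [Monoid K] [AddCommGroup Γ] [LinearOrder Γ]
    [IsOrderedAddMonoid Γ] (v : K → WithTop Γ) (v_mul : ∀ x y : K, v (x * y) = v x + v y)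
    {d : K} (h : 0 ≤ v (d ^ 2)) : 0 ≤ v d := by
  rw [pow_two, v_mul] at h
  exact not_lt.1 fun hd => (Left.add_neg' hd hd).not_ge h

lemma exists_mem_val_eq {K Γ : Type*} [Ring K] [CharP K 2] [AddCommGroup Γ] [LinearOrder Γ]
    (v : K → WithTop Γ) (v_surj : ∀ γ : Γ, ∃ x : K, v x = (γ : WithTop Γ))
    (v_add : ∀ x y : K, min (v x) (v y) ≤ v (x + y)) (O Q : Subring K)
    (hO : ∀ x : K, x ∈ O ↔ 0 ≤ v x)
    (hdense : ∀ a ∈ O, ∀ γ : Γ, ∃ q ∈ Q, (γ : WithTop Γ) < v (a - q))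
    {γ : Γ} (hγ : 0 ≤ γ) : ∃ q ∈ Q, v q = γ := by
  obtain ⟨x, hx⟩ := v_surj γ
  obtain ⟨q, hqQ, hq⟩ := hdense x ((hO x).2 (hx ▸ WithTop.coe_nonneg.2 hγ)) γ
  rw [CharTwo.sub_eq_add, ← hx] at hq
  exact ⟨q, hqQ, (val_eq_of_val_lt_val_add v v_add hq).trans hx⟩

lemma exists_sub_val_gt_w_eq {K Γ : Type*} [Ring K] [LT Γ] (v w : K → WithTop Γ)
    (O Q : Subring K) (hdense : ∀ a ∈ O, ∀ γ : Γ, ∃ q ∈ Q, (γ : WithTop Γ) < v (a - q))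
    (hw_shift : ∀ q ∈ Q, ∀ a ∈ O, w (q + a) = w a) {a : K} (ha : a ∈ O) (γ : Γ) :
    ∃ q ∈ Q, γ < v (a - q) ∧ w (a - q) = w a := by
  obtain ⟨q, hqQ, hq⟩ := hdense a ha γ
  refine ⟨q, hqQ, hq, ?_⟩
  rw [sub_eq_neg_add]
  exact hw_shift (-q) (Q.neg_mem hqQ) a ha

lemma subset_of_surjective_sq {K Γ : Type*} [CommRing K] [CharP K 2] [AddCommGroup Γ]
    [LinearOrder Γ] [IsOrderedAddMonoid Γ] (v w : K → WithTop Γ)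
    (v_mul : ∀ x y : K, v (x * y) = v x + v y)
    (O Q R : Subring K) (hO : ∀ x : K, x ∈ O ↔ 0 ≤ v x) (hQR : (Q : Set K) ⊆ R)
    (hQO : (Q : Set K) ⊆ O) (hdense : ∀ a ∈ O, ∀ γ : Γ, ∃ q ∈ Q, (γ : WithTop Γ) < v (a - q))
    (hw_top : ∀ a ∈ O, (w a = ⊤ ↔ a ∈ Q)) (hw_shift : ∀ q ∈ Q, ∀ a ∈ O, w (q + a) = w a)
    (hw_sq : ∀ a ∈ O, 0 < v a + w a → a ^ 2 ∈ R)
    (hsurj : Function.Surjective (fun x : K => x ^ 2)) : (O : Set K) ⊆ R := by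
  intro x hd
  obtain ⟨d, rfl⟩ := hsurj x
  change d ^ 2 ∈ O at hd
  change d ^ 2 ∈ R
  have hdO : d ∈ O := (hO d).2 (val_nonneg_of_val_sq_nonneg v v_mul ((hO _).1 hd))
  by_cases hdQ : d ∈ Q
  · exact hQR (Q.pow_mem hdQ 2)
  obtain ⟨δ, hδ⟩ := WithTop.ne_top_iff_exists.1 (mt (hw_top d hdO).1 hdQ)
  obtain ⟨q, hqQ, hvq, hwq⟩ := exists_sub_val_gt_w_eq v w O Q hdense hw_shift hdO (-δ)
  have hpos : 0 < v (d - q) + w (d - q) := by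
    rw [hwq, ← hδ, ← WithTop.coe_zero, ← neg_add_cancel δ, WithTop.coe_add]
    exact (WithTop.add_lt_add_iff_right WithTop.coe_ne_top).2 hvq
  have hsplit : d ^ 2 = (d - q) ^ 2 + q ^ 2 := by rw [← CharTwo.add_sq, sub_add_cancel]
  rw [hsplit]
  exact R.add_mem (hw_sq _ (O.sub_mem hdO (hQO hqQ)) hpos) (hQR (Q.pow_mem hqQ 2))

lemma exists_w_add_val_eq {K Γ : Type*} [Field K] [AddCommGroup Γ] [LinearOrder Γ]
    [IsOrderedAddMonoid Γ] (v w : K → WithTop Γ) (v_eq_top_iff : ∀ x : K, v x = ⊤ ↔ x = 0)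
    (v_mul : ∀ x y : K, v (x * y) = v x + v y) (O Q : Subring K)
    (hO : ∀ x : K, x ∈ O ↔ 0 ≤ v x) (hw_top : ∀ a ∈ O, (w a = ⊤ ↔ a ∈ Q))
    (hw_mul_pos : ∀ a ∈ O, ∀ q ∈ Q, 0 < w a + v q → a * q ∈ Q)
    (hw_mul : ∀ a ∈ O, ∀ q ∈ Q, ¬ 0 < w a + v q → w (a * q) = w a + v q)
    {b q : K} {γ : Γ} (hbO : b ∈ O) (hwb : w b ≠ ⊤) (hqQ : q ∈ Q) (hvq : v q = γ)
    (hvb : (γ : WithTop Γ) ≤ v b) : ∃ a ∈ O, w a + v q = w b := by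
  have hq0 : q ≠ 0 := fun h => WithTop.coe_ne_top (hvq ▸ (v_eq_top_iff q).2 h)
  have haq : b / q * q = b := div_mul_cancel₀ b hq0
  have haO : b / q ∈ O := by
    refine (hO _).2 ((WithTop.add_le_add_iff_right (z := (γ : WithTop Γ)) WithTop.coe_ne_top).1 ?_)
    rwa [zero_add, ← hvq, ← v_mul, haq, hvq]
  have hnot : ¬ 0 < w (b / q) + v q := fun hpos =>
    hwb ((hw_top b hbO).2 (haq ▸ hw_mul_pos _ haO q hqQ hpos))
  exact ⟨b / q, haO, by rw [← hw_mul _ haO q hqQ hnot, haq]⟩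

lemma exists_mem_w_le {K Γ : Type*} [Field K] [CharP K 2] [AddCommGroup Γ] [LinearOrder Γ]
    [IsOrderedAddMonoid Γ] (v w : K → WithTop Γ)
    (v_surj : ∀ γ : Γ, ∃ x : K, v x = (γ : WithTop Γ))
    (v_eq_top_iff : ∀ x : K, v x = ⊤ ↔ x = 0) (v_mul : ∀ x y : K, v (x * y) = v x + v y)
    (v_add : ∀ x y : K, min (v x) (v y) ≤ v (x + y)) (O Q : Subring K)
    (hO : ∀ x : K, x ∈ O ↔ 0 ≤ v x) (hQO : (Q : Set K) ⊆ O)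
    (hdense : ∀ a ∈ O, ∀ γ : Γ, ∃ q ∈ Q, (γ : WithTop Γ) < v (a - q))
    (hw_top : ∀ a ∈ O, (w a = ⊤ ↔ a ∈ Q)) (hw_shift : ∀ q ∈ Q, ∀ a ∈ O, w (q + a) = w a)
    (hw_mul_pos : ∀ a ∈ O, ∀ q ∈ Q, 0 < w a + v q → a * q ∈ Q)
    (hw_mul : ∀ a ∈ O, ∀ q ∈ Q, ¬ 0 < w a + v q → w (a * q) = w a + v q)
    (hQne : (Q : Set K) ≠ O) (ε : Γ) : ∃ a ∈ O, w a ≤ ε := by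
  obtain ⟨b, hbO, hbQ⟩ := Set.exists_of_ssubset (hQO.ssubset_of_ne hQne)
  obtain ⟨β, hβ⟩ := WithTop.ne_top_iff_exists.1 (mt (hw_top b hbO).1 hbQ)
  set γ := max (β - ε) 0
  obtain ⟨q, hqQ, hvq⟩ := exists_mem_val_eq v v_surj v_add O Q hO hdense (le_max_right (β - ε) 0)
  obtain ⟨p, hpQ, hvp, hwp⟩ := exists_sub_val_gt_w_eq v w O Q hdense hw_shift hbO γ
  obtain ⟨a, haO, ha⟩ := exists_w_add_val_eq v w v_eq_top_iff v_mul O Q hO hw_top hw_mul_pos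
    hw_mul (O.sub_mem hbO (hQO hpQ)) (hwp ▸ hβ ▸ WithTop.coe_ne_top) hqQ hvq hvp.le
  refine ⟨a, haO, (WithTop.add_le_add_iff_right (z := (γ : WithTop Γ)) WithTop.coe_ne_top).1 ?_⟩
  rw [← hvq, ha, hwp, ← hβ, hvq, ← WithTop.coe_add, WithTop.coe_le_coe]
  exact sub_le_iff_le_add'.1 (le_max_left _ _)

theorem not_perfect_of_Q_ne_O_general
    {K : Type*} [Field K] [CharP K 2]
    {Γ : Type*} [AddCommGroup Γ] [LinearOrder Γ] [IsOrderedAddMonoid Γ]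
    (v : K → WithTop Γ)
    (v_surj : ∀ γ : Γ, ∃ x : K, v x = (γ : WithTop Γ))
    (v_eq_top_iff : ∀ x : K, v x = ⊤ ↔ x = 0)
    (v_mul : ∀ x y : K, v (x * y) = v x + v y)
    (v_add : ∀ x y : K, min (v x) (v y) ≤ v (x + y))
    (O Q R : Subring K)
    (hO : ∀ x : K, x ∈ O ↔ 0 ≤ v x)
    (hQR : (Q : Set K) ⊆ (R : Set K)) (hRO : (R : Set K) ⊆ (O : Set K))
    (I : Set K)
    (hIne : ∃ u ∈ I, u ≠ (0 : K))
    (hIQ : I ⊆ (Q : Set K))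
    (hImul : ∀ r ∈ R, ∀ x ∈ I, r * x ∈ I)
    (hdense : ∀ a ∈ O, ∀ γ : Γ, ∃ q ∈ Q, (γ : WithTop Γ) < v (a - q))
    (w : K → WithTop Γ)
    (hw_top : ∀ a ∈ O, (w a = ⊤ ↔ a ∈ Q))
    (hw_shift : ∀ q ∈ Q, ∀ a ∈ O, w (q + a) = w a)
    (hw_mul_pos : ∀ a ∈ O, ∀ q ∈ Q, 0 < w a + v q → a * q ∈ Q)
    (hw_mul : ∀ a ∈ O, ∀ q ∈ Q, ¬ 0 < w a + v q → w (a * q) = w a + v q)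
    (hw_sq : ∀ a ∈ O, 0 < v a + w a → a ^ 2 ∈ R)
    (hQO : (Q : Set K) ≠ (O : Set K)) :
    ¬ Function.Surjective (fun x : K => x ^ 2) := by
  intro hsurj
  have hQsubO : (Q : Set K) ⊆ O := hQR.trans hRO
  have hOR : (O : Set K) ⊆ R :=
    subset_of_surjective_sq v w v_mul O Q R hO hQR hQsubO hdense hw_top hw_shift hw_sq hsurj
  obtain ⟨u, huI, hu0⟩ := hIne
  have huQ : u ∈ Q := hIQ huI
  obtain ⟨μ, hμ⟩ := WithTop.ne_top_iff_exists.1 (mt (v_eq_top_iff u).1 hu0)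
  obtain ⟨a, haO, hwa⟩ := exists_mem_w_le v w v_surj v_eq_top_iff v_mul v_add O Q hO hQsubO hdense
    hw_top hw_shift hw_mul_pos hw_mul hQO (-μ)
  have hnot : ¬ 0 < w a + v u := by
    refine not_lt.2 ?_
    calc w a + v u ≤ ((-μ : Γ) : WithTop Γ) + μ := by rw [← hμ]; gcongr
      _ = 0 := by rw [← WithTop.coe_add, neg_add_cancel, WithTop.coe_zero]
  have hwau := hw_mul a haO u huQ hnot
  rw [(hw_top _ (O.mul_mem haO (hQsubO huQ))).2 (hIQ (hImul a (hOR haO) u huI))] at hwau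
  exact WithTop.add_ne_top.2 ⟨ne_top_of_le_ne_top WithTop.coe_ne_top hwa, hμ ▸ WithTop.coe_ne_top⟩
    hwau.symm

/-- Let `K` be a field of characteristic 2 with a valuation
`v : K → Γ ∪ {∞}` onto a linearly ordered abelian group `Γ`, valuation ring
`O = {x : v x ≥ 0}` and maximal ideal `M = {x : v x > 0}`.  Let `Q ⊆ R ⊆ O` be
subrings and `I` an ideal of `R` with `I ≠ 0` and `I ⊆ Q ∩ M`.  Assume `Q` is
dense in `O`, and assume there is a function `w : O → Γ ∪ {∞}` with:
`w a = ∞ ↔ a ∈ Q`; `w (q + a) = w a` for `q ∈ Q`, `a ∈ O`; for `a ∈ O`, `q ∈ Q`,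
if `w a + v q > 0` then `a q ∈ Q` and otherwise `w (a q) = w a + v q`; and
`a² ∈ R` whenever `a ∈ O` satisfies `v a + w a > 0`.
If in addition `Q ≠ O`, then `K` is not perfect: Frobenius is not surjective. -/
theorem not_perfect_of_Q_ne_O
    {K : Type*} [Field K] [CharP K 2]
    {Γ : Type*} [AddCommGroup Γ] [LinearOrder Γ] [IsOrderedAddMonoid Γ]
    (v : K → WithTop Γ)
    (v_surj : ∀ γ : Γ, ∃ x : K, v x = (γ : WithTop Γ))
    (v_eq_top_iff : ∀ x : K, v x = ⊤ ↔ x = 0)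
    (v_mul : ∀ x y : K, v (x * y) = v x + v y)
    (v_add : ∀ x y : K, min (v x) (v y) ≤ v (x + y))
    (O Q R : Subring K)
    (hO : ∀ x : K, x ∈ O ↔ 0 ≤ v x)
    (hQR : (Q : Set K) ⊆ (R : Set K)) (hRO : (R : Set K) ⊆ (O : Set K))
    (I : Set K)
    (hIne : ∃ u ∈ I, u ≠ (0 : K))
    (hIQ : I ⊆ (Q : Set K)) (hIM : ∀ x ∈ I, 0 < v x)
    (hIzero : (0 : K) ∈ I)
    (hIadd : ∀ x ∈ I, ∀ y ∈ I, x + y ∈ I)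
    (hImul : ∀ r ∈ R, ∀ x ∈ I, r * x ∈ I)
    (hdense : ∀ a ∈ O, ∀ γ : Γ, ∃ q ∈ Q, (γ : WithTop Γ) < v (a - q))
    (w : K → WithTop Γ)
    (hw_top : ∀ a ∈ O, (w a = ⊤ ↔ a ∈ Q))
    (hw_shift : ∀ q ∈ Q, ∀ a ∈ O, w (q + a) = w a)
    (hw_mul_pos : ∀ a ∈ O, ∀ q ∈ Q, 0 < w a + v q → a * q ∈ Q)
    (hw_mul : ∀ a ∈ O, ∀ q ∈ Q, ¬ 0 < w a + v q → w (a * q) = w a + v q)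
    (hw_sq : ∀ a ∈ O, 0 < v a + w a → a ^ 2 ∈ R)
    (hQO : (Q : Set K) ≠ (O : Set K)) :
    ¬ Function.Surjective (fun x : K => x ^ 2) :=
  not_perfect_of_Q_ne_O_general v v_surj v_eq_top_iff v_mul v_add O Q R hO hQR hRO I hIne hIQ hImul
    hdense w hw_top hw_shift hw_mul_pos hw_mul hw_sq hQO
end

section
/- Assume p = 2 and that the pre-diffeo-valued field structure is dense. Then K is not perfect: the Frobenius map x ↦ x² on K is not surjective. -/
/-- `q : K` is algebraic over the prime field `𝔽_p`. -/
def AlgebraicOverPrime (p : ℕ) {K : Type*} [Field K] [CharP K p] (q : K) : Prop :=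
  ∃ f : Polynomial (ZMod p), f ≠ 0 ∧ Polynomial.eval₂ (ZMod.castHom dvd_rfl K) q f = 0

/-- A pre-diffeo-valued field structure on a field `K` of characteristic `p`,
with value group `Γ`, residue field `k` and mock `K/M` module `D`.
Maps defined on subrings (`res`, `d`, `π`, the scalar action of `O` on `D`) are
encoded as total functions whose behaviour is only constrained on the relevant subring. -/
structure PreDiffeoValued (p : ℕ) (K : Type*) [Field K]
    (Γ : Type*) [AddCommGroup Γ] [LinearOrder Γ] [IsOrderedAddMonoid Γ]
    (k : Type*) [Field k] (D : Type*) [AddCommGroup D] where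
  /-- the valuation, with `⊤` playing the role of `∞` -/
  v : K → WithTop Γ
  v_surj : ∀ γ : Γ, ∃ x : K, v x = (γ : WithTop Γ)
  v_eq_top_iff : ∀ x : K, v x = ⊤ ↔ x = 0
  v_mul : ∀ x y : K, v (x * y) = v x + v y
  v_add : ∀ x y : K, min (v x) (v y) ≤ v (x + y)
  /-- the valuation ring `O = {x : v x ≥ 0}` (with maximal ideal `M = {x : v x > 0}`) -/
  O : Subring K
  mem_O_iff : ∀ x : K, x ∈ O ↔ 0 ≤ v x
  /-- the residue map `O → k` -/
  res : K → k
  res_add : ∀ x ∈ O, ∀ y ∈ O, res (x + y) = res x + res y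
  res_mul : ∀ x ∈ O, ∀ y ∈ O, res (x * y) = res x * res y
  res_one : res 1 = 1
  res_surjective : ∀ z : k, ∃ x ∈ O, res x = z
  res_eq_zero_iff : ∀ x ∈ O, (res x = 0 ↔ 0 < v x)
  /-- the scalar action of `O` on `D` -/
  smul : K → D → D
  smul_add : ∀ a ∈ O, ∀ x y : D, smul a (x + y) = smul a x + smul a y
  add_smul : ∀ a ∈ O, ∀ b ∈ O, ∀ x : D, smul (a + b) x = smul a x + smul b x
  mul_smul : ∀ a ∈ O, ∀ b ∈ O, ∀ x : D, smul (a * b) x = smul a (smul b x)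
  one_smul : ∀ x : D, smul 1 x = x
  /-- `D` is a divisible `O`-module -/
  divisible : ∀ a ∈ O, a ≠ 0 → ∀ y : D, ∃ x : D, smul a x = y
  /-- any two elements of `D` are comparable under the divisibility order -/
  total : ∀ x y : D, (∃ a ∈ O, x = smul a y) ∨ (∃ a ∈ O, y = smul a x)
  /-- the `O`-module embedding of the residue field `k` into `D` -/
  phi : k → D
  phi_add : ∀ z w : k, phi (z + w) = phi z + phi w
  phi_injective : Function.Injective phi
  phi_smul : ∀ a ∈ O, ∀ z : k, phi (res a * z) = smul a (phi z)
  /-- the subring `R ⊆ O` -/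
  R : Subring K
  R_le_O : (R : Set K) ⊆ (O : Set K)
  /-- the surjective derivation `d : R → k`, with `Q = ker d` -/
  d : K → k
  d_add : ∀ x ∈ R, ∀ y ∈ R, d (x + y) = d x + d y
  d_leibniz : ∀ x ∈ R, ∀ y ∈ R, d (x * y) = res x * d y + res y * d x
  d_surjective : ∀ z : k, ∃ x ∈ R, d x = z
  /-- the surjective `Q`-module map `π : O → D` with kernel `Q` -/
  pi : K → D
  pi_add : ∀ x ∈ O, ∀ y ∈ O, pi (x + y) = pi x + pi y
  pi_qsmul : ∀ q ∈ R, d q = 0 → ∀ x ∈ O, pi (q * x) = smul q (pi x)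
  pi_surjective : ∀ y : D, ∃ x ∈ O, pi x = y
  pi_eq_zero_iff : ∀ x ∈ O, (pi x = 0 ↔ x ∈ R ∧ d x = 0)
  pi_eq_phi_d : ∀ x ∈ R, pi x = phi (d x)
  /-- in characteristic `2`, squares of elements of `O` lie in `Q` -/
  char_two_sq : p = 2 → ∀ a ∈ O, a ^ 2 ∈ R ∧ d (a ^ 2) = 0
  /-- in odd characteristic, `π` is a derivation -/
  char_odd_pi : p ≠ 2 → ∀ a ∈ O, ∀ b ∈ O, pi (a * b) = smul a (pi b) + smul b (pi a)

namespace PreDiffeoValued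

variable {p : ℕ} {K : Type*} [Field K] {Γ : Type*} [AddCommGroup Γ] [LinearOrder Γ] [IsOrderedAddMonoid Γ]
  {k : Type*} [Field k] {D : Type*} [AddCommGroup D]

/-- The constant ring `Q = ker d`, as a subset of `K`. -/
def Q (P : PreDiffeoValued p K Γ k D) : Set K := {x | x ∈ P.R ∧ P.d x = 0}

/-- The pre-diffeo-valued structure is dense: `Q` is dense in `O` for the valuation topology. -/
def IsDense (P : PreDiffeoValued p K Γ k D) : Prop :=
  ∀ a ∈ P.O, ∀ γ : Γ, ∃ q ∈ P.Q, (γ : WithTop Γ) < P.v (a - q)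

end PreDiffeoValued


/-!
In characteristic `2` every square of `O` lies in `Q = ker d`. A square root of an element of `O`
again lies in `O`, since `v (y ^ 2) = 2 • v y`. Hence an `x ∈ R` with `d x = 1`, which exists
because `d` is onto `k`, has no square root in `K`.
-/

namespace PreDiffeoValued

variable {p : ℕ} {K : Type*} [Field K] {Γ : Type*} [AddCommGroup Γ] [LinearOrder Γ]
  [IsOrderedAddMonoid Γ] {k : Type*} [Field k] {D : Type*} [AddCommGroup D]

theorem mem_O_of_mul_self_mem_O (P : PreDiffeoValued p K Γ k D) {y : K} (hy : y * y ∈ P.O) :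
    y ∈ P.O := by
  rw [P.mem_O_iff, P.v_mul] at hy
  exact (P.mem_O_iff y).mpr (nonneg_add_self_iff.mp hy)

theorem d_eq_zero_of_isSquare (P : PreDiffeoValued p K Γ k D) (hp2 : p = 2) {x : K}
    (hx : IsSquare x) (hxO : x ∈ P.O) :
    P.d x = 0 := by
  obtain ⟨y, rfl⟩ := hx
  rw [← pow_two]
  exact (P.char_two_sq hp2 y (P.mem_O_of_mul_self_mem_O hxO)).2

theorem exists_not_isSquare (P : PreDiffeoValued p K Γ k D) (hp2 : p = 2) :
    ∃ x : K, ¬ IsSquare x := by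
  obtain ⟨x, hxR, hdx⟩ := P.d_surjective 1
  refine ⟨x, fun hx => ?_⟩
  have hd0 := P.d_eq_zero_of_isSquare hp2 hx (P.R_le_O hxR)
  exact one_ne_zero (hdx ▸ hd0)

end PreDiffeoValued

theorem not_perfect_of_dense_preDiffeoValued_general
    {p : ℕ} {K : Type*} [Field K]
    {Γ : Type*} [AddCommGroup Γ] [LinearOrder Γ] [IsOrderedAddMonoid Γ]
    {k : Type*} [Field k] {D : Type*} [AddCommGroup D]
    (P : PreDiffeoValued p K Γ k D)
    (hp2 : p = 2) :
    ¬ Function.Surjective (fun x : K => x ^ 2) := by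
  intro hsurj
  obtain ⟨x, hx⟩ := P.exists_not_isSquare hp2
  obtain ⟨y, rfl⟩ := hsurj x
  exact hx (IsSquare.sq y)

/-- If `p = 2` and the pre-diffeo-valued field structure on `K` is dense,
then `K` is not perfect: the Frobenius map `x ↦ x²` on `K` is not surjective. -/
theorem not_perfect_of_dense_preDiffeoValued
    {p : ℕ} (hp : p.Prime) {K : Type*} [Field K] [CharP K p]
    {Γ : Type*} [AddCommGroup Γ] [LinearOrder Γ] [IsOrderedAddMonoid Γ]
    {k : Type*} [Field k] {D : Type*} [AddCommGroup D]
    (P : PreDiffeoValued p K Γ k D)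
    (hp2 : p = 2)
    (hdense : P.IsDense) :
    ¬ Function.Surjective (fun x : K => x ^ 2) :=
  not_perfect_of_dense_preDiffeoValued_general P hp2
end

section
/- For every wild α ∈ K with α ≠ 0, either α or α⁻¹ is a root of a monic quadratic polynomial over R: there exist b, c ∈ R with α² + bα + c = 0, or there exist b, c ∈ R with α⁻² + bα⁻¹ + c = 0. -/
/-- `α ∈ K` is wild with respect to the subring `R`: `α ∉ R` and `(α - q)⁻¹ ∉ R` for
every `q` in the relative algebraic closure `k₀` of `𝔽₂` in `K` with `q ≠ α`. -/
def IsWild {K : Type*} [Field K] [CharP K 2] (R : Subring K) (α : K) : Prop :=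
  α ∉ R ∧ ∀ q : K, AlgebraicOverPrime 2 q → q ≠ α → (α - q)⁻¹ ∉ R

/-!
Normalise the relation `α² x + α y + z = 0` provided by (H1) at the unit coefficient. A unit `x`
or `z` gives a monic quadratic for `α` or for `α⁻¹`. A unit `y` is impossible: then
`β = α x` is a root of the Artin–Schreier polynomial `X² + X + x z` over `R`, so by (H2) it is
tame, and a tame root of a monic quadratic over `R` lies in `R`. As `R` is local, `β` or `1 + β`
is a unit, whence `α⁻¹ = x β⁻¹ ∈ R` or `α = z (1 + β)⁻¹ ∈ R`, against the wildness of `α`.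
-/

section

variable {K : Type*} [Field K]

theorem algebraicOverPrime_zero (p : ℕ) [CharP K p] [Nontrivial (ZMod p)] :
    AlgebraicOverPrime p (0 : K) :=
  ⟨Polynomial.X, Polynomial.X_ne_zero, by simp⟩

theorem Subring.isLocalRing_of_nonunits_subset {R : Subring K} (𝔭 : Set K)
    (h𝔭add : ∀ x ∈ 𝔭, ∀ y ∈ 𝔭, x + y ∈ 𝔭) (h𝔭one : (1 : K) ∉ 𝔭)
    (hlocal : ∀ x ∈ R, x ∉ 𝔭 → ∃ y ∈ R, x * y = 1) : IsLocalRing R := by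
  have hmem : ∀ a : R, ¬IsUnit a → (a : K) ∈ 𝔭 := fun a ha => by
    by_contra h
    obtain ⟨b, hb, hab⟩ := hlocal a a.2 h
    exact ha (IsUnit.of_mul_eq_one ⟨b, hb⟩ (Subtype.ext hab))
  refine IsLocalRing.of_isUnit_or_isUnit_one_sub_self fun a => ?_
  by_contra! h
  apply h𝔭one
  simpa using h𝔭add _ (hmem a h.1) _ (hmem (1 - a) h.2)

theorem Subring.exists_monic_quadratic_of_mul_eq_one {R : Subring K} {a a' b c t : K}
    (ha : a * a' = 1) (ha' : a' ∈ R) (hb : b ∈ R) (hc : c ∈ R)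
    (h : a * t ^ 2 + b * t + c = 0) : ∃ b ∈ R, ∃ c ∈ R, t ^ 2 + b * t + c = 0 :=
  ⟨b * a', mul_mem hb ha', c * a', mul_mem hc ha', by linear_combination a' * h - t ^ 2 * ha⟩

/-- Expanding the quadratic at `q` and dividing by `β - q` shows
`β - q = -(2q + b) - (q² + bq + c)(β - q)⁻¹`. -/
theorem Subring.mem_of_inv_sub_mem {R : Subring K} {β q b c : K} (hq : q ∈ R) (hb : b ∈ R)
    (hc : c ∈ R) (hroot : β ^ 2 + b * β + c = 0) (hinv : (β - q)⁻¹ ∈ R) : β ∈ R := by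
  obtain rfl | hne := eq_or_ne β q
  · exact hq
  have hw : (β - q) * (β - q)⁻¹ = 1 := mul_inv_cancel₀ (sub_ne_zero.2 hne)
  have hβ : β = -q - b - (q ^ 2 + b * q + c) * (β - q)⁻¹ := by
    linear_combination (β - q)⁻¹ * hroot - (β + q + b) * hw
  rw [hβ]
  exact sub_mem (sub_mem (neg_mem hq) hb)
    (mul_mem (add_mem (add_mem (pow_mem hq 2) (mul_mem hb hq)) hc) hinv)

section CharTwo

variable [CharP K 2] {R : Subring K}

theorem IsWild.inv_notMem {α : K} (hα : IsWild R α) (hα0 : α ≠ 0) : α⁻¹ ∉ R := by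
  simpa using hα.2 0 (algebraicOverPrime_zero 2) hα0.symm

theorem mem_of_not_isWild (hk0 : ∀ q : K, AlgebraicOverPrime 2 q → q ∈ R) {β b c : K}
    (hβ : ¬ IsWild R β) (hb : b ∈ R) (hc : c ∈ R) (hroot : β ^ 2 + b * β + c = 0) :
    β ∈ R := by
  by_contra hβR
  simp only [IsWild, not_and, not_forall, not_not] at hβ
  obtain ⟨q, hq, -, hinv⟩ := hβ hβR
  exact hβR (R.mem_of_inv_sub_mem (hk0 q hq) hb hc hroot hinv)

theorem IsWild.sq_mul_add_add_ne_zero [IsLocalRing R]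
    (hk0 : ∀ q : K, AlgebraicOverPrime 2 q → q ∈ R)
    (hArtinSchreier : ∀ β : K, IsWild R β → ∀ c ∈ R, β ^ 2 + β + c ≠ 0)
    {α x z : K} (hα : IsWild R α) (hα0 : α ≠ 0) (hx : x ∈ R) (hz : z ∈ R) :
    α ^ 2 * x + α + z ≠ 0 := by
  intro h
  have h2 : (2 : K) = 0 := CharTwo.two_eq_zero
  have hroot : (α * x) ^ 2 + 1 * (α * x) + x * z = 0 := by linear_combination x * h
  have hβ : ¬ IsWild R (α * x) := fun hβ =>
    hArtinSchreier _ hβ _ (mul_mem hx hz) (by simpa using hroot)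
  have hβR : α * x ∈ R := mem_of_not_isWild hk0 hβ (one_mem R) (mul_mem hx hz) hroot
  rcases IsLocalRing.isUnit_or_isUnit_one_sub_self (⟨α * x, hβR⟩ : R) with hu | hu
  · obtain ⟨⟨β', hβ'⟩, hββ'⟩ := hu.exists_right_inv
    have hββ' : α * x * β' = 1 := congrArg Subtype.val hββ'
    apply hα.inv_notMem hα0
    rw [show α⁻¹ = x * β' by
      linear_combination -α⁻¹ * hββ' + x * β' * mul_inv_cancel₀ hα0]
    exact mul_mem hx hβ'
  · obtain ⟨⟨γ, hγ⟩, hγ'⟩ := hu.exists_right_inv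
    have hγ' : (1 - α * x) * γ = 1 := congrArg Subtype.val hγ'
    apply hα.1
    rw [show α = z * γ by linear_combination -γ * h + α * γ * h2 - α * hγ']
    exact mul_mem hz hγ

end CharTwo

end

theorem wild_satisfies_monic_quadratic_general
    {K : Type*} [Field K] [CharP K 2]
    (R : Subring K)
    (hk0 : ∀ q : K, AlgebraicOverPrime 2 q → q ∈ R)
    (𝔭 : Set K)
    (h𝔭add : ∀ x ∈ 𝔭, ∀ y ∈ 𝔭, x + y ∈ 𝔭)
    (h𝔭one : (1 : K) ∉ 𝔭)
    (hlocal : ∀ x ∈ R, x ∉ 𝔭 → ∃ y ∈ R, x * y = 1)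
    (H1 : ∀ a b c : K, ∃ x ∈ R, ∃ y ∈ R, ∃ z ∈ R,
      a * x + b * y + c * z = 0 ∧
      ((∃ x' ∈ R, x * x' = 1) ∨ (∃ y' ∈ R, y * y' = 1) ∨ (∃ z' ∈ R, z * z' = 1)))
    (H2 : ∀ α : K, IsWild R α → ∀ b ∈ R, ∀ c ∈ R, α ^ 2 + b * α + c = 0 →
      b ∈ 𝔭 ∧ ∃ d ∈ R, c - d ^ 2 ∈ 𝔭) :
    ∀ α : K, α ≠ 0 → IsWild R α →
      (∃ b ∈ R, ∃ c ∈ R, α ^ 2 + b * α + c = 0) ∨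
      (∃ b ∈ R, ∃ c ∈ R, (α⁻¹) ^ 2 + b * α⁻¹ + c = 0) := by
  intro α hα0 hα
  have : IsLocalRing R := R.isLocalRing_of_nonunits_subset 𝔭 h𝔭add h𝔭one hlocal
  have hArtinSchreier : ∀ β : K, IsWild R β → ∀ c ∈ R, β ^ 2 + β + c ≠ 0 :=
    fun β hβ c hc hroot => h𝔭one (H2 β hβ 1 (one_mem R) c hc (by simpa using hroot)).1
  obtain ⟨x, hx, y, hy, z, hz, heq, ⟨x', hx', hxx'⟩ | ⟨y', hy', hyy'⟩ | ⟨z', hz', hzz'⟩⟩ :=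
    H1 (α ^ 2) α 1
  · exact Or.inl (R.exists_monic_quadratic_of_mul_eq_one hxx' hx' hy hz
      (by linear_combination heq))
  · exact absurd (by linear_combination y' * heq - α * hyy')
      (hα.sq_mul_add_add_ne_zero hk0 hArtinSchreier hα0 (mul_mem hx hy') (mul_mem hz hy'))
  · refine Or.inr (R.exists_monic_quadratic_of_mul_eq_one hzz' hz' hy hx ?_)
    field_simp
    linear_combination heq

/-- Let `K` be a field of characteristic 2, `R ⊆ K` a local subring
containing `k₀ = 𝔽₂^alg ∩ K`, with maximal ideal `𝔭`.  Assume (H1): for all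
`a, b, c ∈ K` there are `x, y, z ∈ R` with `ax + by + cz = 0` and one of `x, y, z` a
unit of `R`; and (H2): for every wild `α` and `b, c ∈ R` with `α² + bα + c = 0` one has
`b ∈ 𝔭` and `c - d² ∈ 𝔭` for some `d ∈ R`.  Then every wild `α ≠ 0` satisfies: `α` or
`α⁻¹` is a root of a monic quadratic polynomial over `R`. -/
theorem wild_satisfies_monic_quadratic
    {K : Type*} [Field K] [CharP K 2]
    (R : Subring K)
    (hk0 : ∀ q : K, AlgebraicOverPrime 2 q → q ∈ R)
    (𝔭 : Set K) (h𝔭R : 𝔭 ⊆ (R : Set K))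
    (h𝔭zero : (0 : K) ∈ 𝔭)
    (h𝔭add : ∀ x ∈ 𝔭, ∀ y ∈ 𝔭, x + y ∈ 𝔭)
    (h𝔭mul : ∀ r ∈ R, ∀ x ∈ 𝔭, r * x ∈ 𝔭)
    (h𝔭one : (1 : K) ∉ 𝔭)
    (hlocal : ∀ x ∈ R, x ∉ 𝔭 → ∃ y ∈ R, x * y = 1)
    (H1 : ∀ a b c : K, ∃ x ∈ R, ∃ y ∈ R, ∃ z ∈ R,
      a * x + b * y + c * z = 0 ∧
      ((∃ x' ∈ R, x * x' = 1) ∨ (∃ y' ∈ R, y * y' = 1) ∨ (∃ z' ∈ R, z * z' = 1)))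
    (H2 : ∀ α : K, IsWild R α → ∀ b ∈ R, ∀ c ∈ R, α ^ 2 + b * α + c = 0 →
      b ∈ 𝔭 ∧ ∃ d ∈ R, c - d ^ 2 ∈ 𝔭) :
    ∀ α : K, α ≠ 0 → IsWild R α →
      (∃ b ∈ R, ∃ c ∈ R, α ^ 2 + b * α + c = 0) ∨
      (∃ b ∈ R, ∃ c ∈ R, (α⁻¹) ^ 2 + b * α⁻¹ + c = 0) :=
  wild_satisfies_monic_quadratic_general R hk0 𝔭 h𝔭add h𝔭one hlocal H1 H2
end

section
/- The integral closure O of R in K is a valuation subring of K (for every x ∈ K^×, x ∈ O or x⁻¹ ∈ O), and if M denotes the maximal ideal of O, then for every α ∈ M with α ∉ R there exist b, c ∈ R with α² + bα + c = 0. -/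
section

variable {K : Type*} [Field K] (R : Subring K)

namespace Subring

theorem isUnit_mk_iff {a : K} (ha : a ∈ R) : IsUnit (⟨a, ha⟩ : R) ↔ ∃ b ∈ R, a * b = 1 :=
  isUnit_iff_exists_inv.trans
    ⟨fun ⟨b, hb⟩ => ⟨b, b.2, congrArg Subtype.val hb⟩, fun ⟨b, hb, h⟩ => ⟨⟨b, hb⟩, Subtype.ext h⟩⟩

theorem isLocalRing_of_nonunits_subset_s4 {𝔭 : Set K} (hadd : ∀ x ∈ 𝔭, ∀ y ∈ 𝔭, x + y ∈ 𝔭)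
    (hone : (1 : K) ∉ 𝔭) (hunit : ∀ x ∈ R, x ∉ 𝔭 → ∃ y ∈ R, x * y = 1) : IsLocalRing R := by
  refine IsLocalRing.of_isUnit_or_isUnit_one_sub_self fun a => ?_
  by_cases ha : (a : K) ∈ 𝔭
  · have h1a : (1 - a : K) ∉ 𝔭 := fun h => hone (by simpa using hadd _ h _ ha)
    exact Or.inr ((isUnit_mk_iff R (1 - a).2).2 (hunit _ (1 - a).2 (by simpa using h1a)))
  · exact Or.inl ((isUnit_mk_iff R a.2).2 (hunit _ a.2 ha))

variable [IsLocalRing R]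

theorem exists_mul_eq_one_or_exists_one_add_mul_mul_eq_one {a c : K} (ha : a ∈ R) (hc : c ∈ R) :
    (∃ b ∈ R, a * b = 1) ∨ ∃ b ∈ R, (1 + c * a) * b = 1 := by
  have hca : c * a ∈ R := R.mul_mem hc ha
  rcases IsLocalRing.isUnit_or_isUnit_of_add_one (a := ⟨1 + c * a, R.add_mem R.one_mem hca⟩)
    (b := -⟨c * a, hca⟩) (Subtype.ext (by simp)) with h | h
  · exact Or.inr ((isUnit_mk_iff R _).1 h)
  · refine Or.inl ((isUnit_mk_iff R ha).1 (isUnit_of_mul_isUnit_right (x := ⟨c, hc⟩) ?_))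
    exact (IsUnit.neg_iff _).1 h

theorem mem_or_inv_mem_of_inv_sub_mem {t q : K} (hq : q ∈ R) (hqt : q ≠ t) (hr : (t - q)⁻¹ ∈ R) :
    t ∈ R ∨ t⁻¹ ∈ R := by
  have hinv : (t - q) * (t - q)⁻¹ = 1 := mul_inv_cancel₀ (sub_ne_zero.2 hqt.symm)
  rcases exists_mul_eq_one_or_exists_one_add_mul_mul_eq_one R hr hq with ⟨b, hb, hrb⟩ | ⟨b, hb, h⟩
  · have : t = q + b := by linear_combination (q - t) * hrb + b * hinv
    exact Or.inl (this ▸ R.add_mem hq hb)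
  · have : t * ((t - q)⁻¹ * b) = 1 := by linear_combination b * hinv + h
    exact Or.inr (inv_eq_of_mul_eq_one_right this ▸ R.mul_mem hr hb)

theorem mem_or_inv_mem_of_mul_mem {x u w : K} (hu : u ∈ R) (hw : w ∈ R) (hux : u * x ∈ R)
    (h : u * x ^ 2 + x + w = 0) : x ∈ R ∨ x⁻¹ ∈ R := by
  rcases exists_mul_eq_one_or_exists_one_add_mul_mul_eq_one R hux R.one_mem with
    ⟨b, hb, hxb⟩ | ⟨b, hb, hb1⟩
  · have : x * (u * b) = 1 := by linear_combination hxb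
    exact Or.inr (inv_eq_of_mul_eq_one_right this ▸ R.mul_mem hu hb)
  · have : x = -(w * b) := by linear_combination -x * hb1 + b * h
    exact Or.inl (this ▸ R.neg_mem (R.mul_mem hw hb))

end Subring

def IsRootOfMonicQuadratic (x : K) : Prop :=
  ∃ b ∈ R, ∃ c ∈ R, x ^ 2 + b * x + c = 0

variable {R}

theorem isRootOfMonicQuadratic_of_mem {x : K} (hx : x ∈ R) : IsRootOfMonicQuadratic R x :=
  ⟨-x, R.neg_mem hx, 0, R.zero_mem, by ring⟩

theorem IsRootOfMonicQuadratic.isIntegral {x : K} (h : IsRootOfMonicQuadratic R x) :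
    IsIntegral R x := by
  obtain ⟨b, hb, c, hc, h⟩ := h
  refine ⟨.X ^ 2 + .C ⟨b, hb⟩ * .X + .C ⟨c, hc⟩, by monicity!, ?_⟩
  simpa [Algebra.algebraMap_ofSubring] using h

theorem IsRootOfMonicQuadratic.mem_of_inv_mem {x : K} (h : IsRootOfMonicQuadratic R x)
    (hinv : x⁻¹ ∈ R) : x ∈ R := by
  obtain ⟨b, hb, c, hc, h⟩ := h
  rcases eq_or_ne x 0 with rfl | hx
  · exact R.zero_mem
  have : x = -b - c * x⁻¹ := by
    field_simp
    linear_combination h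
  exact this ▸ R.sub_mem (R.neg_mem hb) (R.mul_mem hc hinv)

variable (R) [IsLocalRing R]

theorem isRootOfMonicQuadratic_or_inv
    (H1 : ∀ a b c : K, ∃ x ∈ R, ∃ y ∈ R, ∃ z ∈ R,
      a * x + b * y + c * z = 0 ∧
      ((∃ x' ∈ R, x * x' = 1) ∨ (∃ y' ∈ R, y * y' = 1) ∨ (∃ z' ∈ R, z * z' = 1)))
    (hAS : ∀ t c : K, c ∈ R → t ^ 2 + t + c = 0 → t ∈ R) {x : K} (hx : x ≠ 0) :
    IsRootOfMonicQuadratic R x ∨ IsRootOfMonicQuadratic R x⁻¹ := by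
  obtain ⟨u, hu, v, hv, w, hw, heq, hunit⟩ := H1 (x ^ 2) x 1
  rcases hunit with ⟨u', hu', huu⟩ | ⟨v', hv', hvv⟩ | ⟨w', hw', hww⟩
  · exact Or.inl ⟨v * u', R.mul_mem hv hu', w * u', R.mul_mem hw hu',
      by linear_combination u' * heq - x ^ 2 * huu⟩
  · have hnorm : u * v' * x ^ 2 + x + w * v' = 0 := by linear_combination v' * heq - x * hvv
    have hux : u * v' * x ∈ R := hAS _ (u * v' * (w * v')) (R.mul_mem (R.mul_mem hu hv')
      (R.mul_mem hw hv')) (by linear_combination u * v' * hnorm)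
    exact (Subring.mem_or_inv_mem_of_mul_mem R (R.mul_mem hu hv') (R.mul_mem hw hv') hux
      hnorm).imp isRootOfMonicQuadratic_of_mem isRootOfMonicQuadratic_of_mem
  · refine Or.inr ⟨v * w', R.mul_mem hv hw', u * w', R.mul_mem hu hw', ?_⟩
    field_simp
    linear_combination w' * heq - hww

section CharTwo

variable [CharP K 2]

theorem mem_or_inv_mem_of_not_isWild (hk0 : ∀ q : K, AlgebraicOverPrime 2 q → q ∈ R) {t : K}
    (ht : ¬IsWild R t) : t ∈ R ∨ t⁻¹ ∈ R := by
  by_cases htR : t ∈ R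
  · exact Or.inl htR
  obtain ⟨q, hq, hqt, hr⟩ : ∃ q, AlgebraicOverPrime 2 q ∧ q ≠ t ∧ (t - q)⁻¹ ∈ R := by
    simpa [IsWild, htR] using ht
  exact Subring.mem_or_inv_mem_of_inv_sub_mem R (hk0 q hq) hqt hr

theorem mem_of_sq_add_self_add_eq_zero (hk0 : ∀ q : K, AlgebraicOverPrime 2 q → q ∈ R) {𝔭 : Set K}
    (hone : (1 : K) ∉ 𝔭)
    (H2 : ∀ α : K, IsWild R α → ∀ b ∈ R, ∀ c ∈ R, α ^ 2 + b * α + c = 0 →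
      b ∈ 𝔭 ∧ ∃ d ∈ R, c - d ^ 2 ∈ 𝔭)
    {t c : K} (hc : c ∈ R) (h : t ^ 2 + t + c = 0) : t ∈ R := by
  have h' : t ^ 2 + 1 * t + c = 0 := by rwa [one_mul]
  have htame : ¬IsWild R t := fun hwild => hone (H2 t hwild 1 R.one_mem c hc h').1
  exact (mem_or_inv_mem_of_not_isWild R hk0 htame).elim id
    (IsRootOfMonicQuadratic.mem_of_inv_mem ⟨1, R.one_mem, c, hc, h'⟩)

end CharTwo

end

theorem integralClosure_is_valuation_ring_general
    {K : Type*} [Field K] [CharP K 2]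
    (R : Subring K)
    (hk0 : ∀ q : K, AlgebraicOverPrime 2 q → q ∈ R)
    (𝔭 : Set K)
    (h𝔭add : ∀ x ∈ 𝔭, ∀ y ∈ 𝔭, x + y ∈ 𝔭)
    (h𝔭one : (1 : K) ∉ 𝔭)
    (hlocal : ∀ x ∈ R, x ∉ 𝔭 → ∃ y ∈ R, x * y = 1)
    (H1 : ∀ a b c : K, ∃ x ∈ R, ∃ y ∈ R, ∃ z ∈ R,
      a * x + b * y + c * z = 0 ∧
      ((∃ x' ∈ R, x * x' = 1) ∨ (∃ y' ∈ R, y * y' = 1) ∨ (∃ z' ∈ R, z * z' = 1)))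
    (H2 : ∀ α : K, IsWild R α → ∀ b ∈ R, ∀ c ∈ R, α ^ 2 + b * α + c = 0 →
      b ∈ 𝔭 ∧ ∃ d ∈ R, c - d ^ 2 ∈ 𝔭) :
    (∀ x : K, x ≠ 0 → x ∈ integralClosure ↥R K ∨ x⁻¹ ∈ integralClosure ↥R K) ∧
    (∀ α : K, α ∈ integralClosure ↥R K →
      ¬(∃ β ∈ integralClosure ↥R K, α * β = 1) → α ∉ R →
      ∃ b ∈ R, ∃ c ∈ R, α ^ 2 + b * α + c = 0) := by
  have : IsLocalRing R := R.isLocalRing_of_nonunits_subset_s4 h𝔭add h𝔭one hlocal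
  have key : ∀ x : K, x ≠ 0 → IsRootOfMonicQuadratic R x ∨ IsRootOfMonicQuadratic R x⁻¹ :=
    fun x => isRootOfMonicQuadratic_or_inv R H1
      (fun _ _ => mem_of_sq_add_self_add_eq_zero R hk0 h𝔭one H2)
  refine ⟨fun x hx => (key x hx).imp (·.isIntegral) (·.isIntegral), ?_⟩
  intro α _ hα_nonunit hαR
  have hα : α ≠ 0 := by rintro rfl; exact hαR R.zero_mem
  exact (key α hα).resolve_right fun h => hα_nonunit ⟨α⁻¹, h.isIntegral, mul_inv_cancel₀ hα⟩

/-- With the hypotheses of the wild/tame setting (char 2, `R` local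
with maximal ideal `𝔭` containing `k₀`, (H1), (H2)): the integral closure `O` of `R` in
`K` is a valuation subring of `K`, and every `α` in the maximal ideal `M` of `O` (i.e.
every non-unit of `O`) with `α ∉ R` satisfies a monic quadratic equation
`α² + bα + c = 0` with `b, c ∈ R`. -/
theorem integralClosure_is_valuation_ring
    {K : Type*} [Field K] [CharP K 2]
    (R : Subring K)
    (hk0 : ∀ q : K, AlgebraicOverPrime 2 q → q ∈ R)
    (𝔭 : Set K) (h𝔭R : 𝔭 ⊆ (R : Set K))
    (h𝔭zero : (0 : K) ∈ 𝔭)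
    (h𝔭add : ∀ x ∈ 𝔭, ∀ y ∈ 𝔭, x + y ∈ 𝔭)
    (h𝔭mul : ∀ r ∈ R, ∀ x ∈ 𝔭, r * x ∈ 𝔭)
    (h𝔭one : (1 : K) ∉ 𝔭)
    (hlocal : ∀ x ∈ R, x ∉ 𝔭 → ∃ y ∈ R, x * y = 1)
    (H1 : ∀ a b c : K, ∃ x ∈ R, ∃ y ∈ R, ∃ z ∈ R,
      a * x + b * y + c * z = 0 ∧
      ((∃ x' ∈ R, x * x' = 1) ∨ (∃ y' ∈ R, y * y' = 1) ∨ (∃ z' ∈ R, z * z' = 1)))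
    (H2 : ∀ α : K, IsWild R α → ∀ b ∈ R, ∀ c ∈ R, α ^ 2 + b * α + c = 0 →
      b ∈ 𝔭 ∧ ∃ d ∈ R, c - d ^ 2 ∈ 𝔭) :
    (∀ x : K, x ≠ 0 → x ∈ integralClosure ↥R K ∨ x⁻¹ ∈ integralClosure ↥R K) ∧
    (∀ α : K, α ∈ integralClosure ↥R K →
      ¬(∃ β ∈ integralClosure ↥R K, α * β = 1) → α ∉ R →
      ∃ b ∈ R, ∃ c ∈ R, α ^ 2 + b * α + c = 0) :=
  integralClosure_is_valuation_ring_general R hk0 𝔭 h𝔭add h𝔭one hlocal H1 H2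
end

section
/- For every x ∈ O there exists y ∈ R with x − y ∈ M; consequently the natural ring homomorphism R/(R ∩ M) → O/M is an isomorphism, i.e. the residue field of O coincides with that of R. -/
/-!
If `x ∈ O` is not a unit it is congruent to `0 ∈ R` modulo `M`. If `x` is a unit outside `R`,
take `ξ ∈ {x, x⁻¹}` with `ξ² + bξ + c = 0`. In characteristic 2, `(ξ - d)² = ξ² + d²`
is congruent modulo `M` to `ξ² + bξ + c = 0`, so `ξ ≡ d (mod M)` because `M` consists of the
non-units. If `ξ = x⁻¹`, then `d` is a unit of `O` lying in `R` outside `M`, hence a unit of the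
local ring `R`, and `x ≡ d⁻¹`. Thus `R → O/M` is surjective.
-/

namespace Ideal

variable {A : Type*} [CommRing A]

theorem sub_sq_mem_of_quadratic [CharP A 2] (I : Ideal A) {ξ b c d : A} (hb : b ∈ I)
    (hc : c - d ^ 2 ∈ I) (h : ξ ^ 2 + b * ξ + c = 0) : (ξ - d) ^ 2 ∈ I := by
  have hsq : (ξ - d) ^ 2 = -(b * ξ) - (c - d ^ 2) := by
    linear_combination (-(ξ * d)) * CharTwo.two_eq_zero (R := A) + h
  rw [hsq]
  exact I.sub_mem (I.neg_mem (I.mul_mem_right ξ hb)) hc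

theorem sub_mem_of_inv_sub_mem (I : Ideal A) {ξ x d e : A} (hξ : ξ * x = 1) (hd : e * d = 1)
    (h : ξ - d ∈ I) : x - e ∈ I := by
  have hxe : x - e = -(x * e) * (ξ - d) := by linear_combination (-x) * hd + e * hξ
  rw [hxe]
  exact I.mul_mem_left _ h

theorem mem_of_sq_mem_of_forall_mem_iff_not_isUnit {M : Ideal A}
    (hM : ∀ x, x ∈ M ↔ ¬IsUnit x) {x : A} (h : x ^ 2 ∈ M) : x ∈ M :=
  (hM x).2 fun hx => (hM _).1 h (hx.pow 2)

theorem quotientMap_subtype_bijective {R : Subring A} {M : Ideal A}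
    (h : ∀ x, ∃ y ∈ R, x - y ∈ M) :
    Function.Bijective (quotientMap (I := M.comap R.subtype) M R.subtype le_rfl) := by
  refine ⟨quotientMap_injective, fun z => ?_⟩
  obtain ⟨x, rfl⟩ := Quotient.mk_surjective z
  obtain ⟨y, hyR, hxy⟩ := h x
  refine ⟨Quotient.mk _ ⟨y, hyR⟩, ?_⟩
  rw [quotientMap_mk, Quotient.eq, ← neg_sub]
  exact M.neg_mem hxy

end Ideal

theorem residue_field_of_O_eq_residue_field_of_R_general
    {K : Type*} [Field K] [CharP K 2]
    (O : Subring K)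
    (M : Ideal ↥O)
    (hM : ∀ x : ↥O, x ∈ M ↔ ¬ IsUnit x)
    (R : Subring ↥O)
    (hlocal : ∀ x : ↥R, (x : ↥O) ∉ M → IsUnit x)
    (hquad : ∀ x : ↥O, IsUnit x → x ∉ R →
      ∃ ξ : ↥O, (ξ = x ∨ ξ * x = 1) ∧
        ∃ b ∈ R, ∃ c ∈ R, b ∈ M ∧ (∃ d ∈ R, c - d ^ 2 ∈ M) ∧
          ξ ^ 2 + b * ξ + c = 0) :
    (∀ x : ↥O, ∃ y ∈ R, x - y ∈ M) ∧
    Function.Bijective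
      (Ideal.quotientMap (I := M.comap (Subring.subtype R)) M (Subring.subtype R)
        le_rfl) := by
  have lift : ∀ x : ↥O, ∃ y ∈ R, x - y ∈ M := by
    intro x
    by_cases hx : IsUnit x
    swap
    · exact ⟨0, R.zero_mem, by simpa using (hM x).2 hx⟩
    by_cases hxR : x ∈ R
    · exact ⟨x, hxR, by simp⟩
    obtain ⟨ξ, hξx, b, -, c, -, hbM, ⟨d, hdR, hcd⟩, hξ⟩ := hquad x hx hxR
    have hξd : ξ - d ∈ M := Ideal.mem_of_sq_mem_of_forall_mem_iff_not_isUnit hM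
      (M.sub_sq_mem_of_quadratic hbM hcd hξ)
    obtain rfl | hξx := hξx
    · exact ⟨d, hdR, hξd⟩
    have hdM : (d : ↥O) ∉ M := fun hd =>
      (hM ξ).1 (by simpa using M.add_mem hξd hd) (.of_mul_eq_one x hξx)
    obtain ⟨e, he⟩ := (hlocal ⟨d, hdR⟩ hdM).exists_left_inv
    exact ⟨e, e.2, M.sub_mem_of_inv_sub_mem hξx (congrArg Subtype.val he) hξd⟩
  exact ⟨lift, Ideal.quotientMap_subtype_bijective lift⟩

/-- Let `K` be a field of characteristic 2, `O` a valuation subring of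
`K` with maximal ideal `M`, and `R` a subring of `O` which is a local ring whose maximal
ideal is `R ∩ M`.  Assume that every unit `x` of `O` with `x ∉ R` admits `ξ ∈ {x, x⁻¹}`
satisfying `ξ² + bξ + c = 0` with `b, c ∈ R`, `b ∈ M` and `c - d² ∈ M` for some `d ∈ R`.
Then for every `x ∈ O` there exists `y ∈ R` with `x - y ∈ M`; consequently the natural
ring homomorphism `R/(R ∩ M) → O/M` is an isomorphism, i.e. the residue field of `O`
coincides with that of `R`. -/
theorem residue_field_of_O_eq_residue_field_of_R
    {K : Type*} [Field K] [CharP K 2]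
    (O : Subring K)
    (hval : ∀ x : K, x ≠ 0 → x ∈ O ∨ x⁻¹ ∈ O)
    (M : Ideal ↥O)
    (hM : ∀ x : ↥O, x ∈ M ↔ ¬ IsUnit x)
    (R : Subring ↥O)
    (hlocal : ∀ x : ↥R, (x : ↥O) ∉ M → IsUnit x)
    (hquad : ∀ x : ↥O, IsUnit x → x ∉ R →
      ∃ ξ : ↥O, (ξ = x ∨ ξ * x = 1) ∧
        ∃ b ∈ R, ∃ c ∈ R, b ∈ M ∧ (∃ d ∈ R, c - d ^ 2 ∈ M) ∧
          ξ ^ 2 + b * ξ + c = 0) :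
    (∀ x : ↥O, ∃ y ∈ R, x - y ∈ M) ∧
    Function.Bijective
      (Ideal.quotientMap (I := M.comap (Subring.subtype R)) M (Subring.subtype R)
        le_rfl) :=
  residue_field_of_O_eq_residue_field_of_R_general O M hM R hlocal hquad
end

section
/- Assume the pre-diffeo-valued field structure is dense. Then for every nonzero a ∈ R there exist x, y ∈ K with x·y ∈ a·R, x ∉ R and y ∉ R. (Hence the ring topology on K in which the nonzero principal ideals aR form a neighborhood basis of 0 fails the defining axiom of a V-topology.) -/
/-- A pre-diffeo-valued field structure together with the secondary valuation
`val : D → Γ ∪ {∞}`. -/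
structure PreDiffeoValuedS (p : ℕ) (K : Type*) [Field K]
    (Γ : Type*) [AddCommGroup Γ] [LinearOrder Γ] [IsOrderedAddMonoid Γ]
    (k : Type*) [Field k] (D : Type*) [AddCommGroup D]
    extends PreDiffeoValued p K Γ k D where
  val : D → WithTop Γ
  val_nonpos_or_top : ∀ x : D, val x ≤ 0 ∨ val x = ⊤
  val_eq_top_iff : ∀ x : D, val x = ⊤ ↔ x = 0
  val_nonneg_iff : ∀ x : D, 0 ≤ val x ↔ ∃ z : k, phi z = x
  val_smul_of_nonpos : ∀ a ∈ O, ∀ x : D, v a + val x ≤ 0 → val (smul a x) = v a + val x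
  val_smul_of_pos : ∀ a ∈ O, ∀ x : D, 0 < v a + val x → val (smul a x) = ⊤
  val_add : ∀ x y : D, min (val x) (val y) ≤ val (x + y)
  smul_of_val_le : ∀ x y : D, val x ≤ val y → ∃ a ∈ O, y = smul a x
  smul_of_val_lt : ∀ x y : D, val x < val y → ∃ a : K, 0 < v a ∧ y = smul a x
  val_unbounded : ∀ γ : Γ, ∃ x : D, val x ≤ (γ : WithTop Γ)

/-! Choose `ε > 0` and `z ∈ D` with `val z < -(v a + ε)`, and use density to lift `z` to some
`c ∈ O` with `π c = z` and `v c` so large that `(q c) • z = 0` for `q ∈ Q` with `v q = ε`.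
Then `x = c` and `y = (a q) c` work: `val (π x) = val z < 0` and `val (π y) = v (a q) + val z < 0`,
so neither lies in `R`, while `x y = a (q c²)` with `q c² ∈ R`. In characteristic 2 this is because
`c² ∈ Q`; in odd characteristic `π (q c²) = 2 (q c) • z = 0`. -/

namespace PreDiffeoValued

variable {p : ℕ} {K : Type*} [Field K] {Γ : Type*} [AddCommGroup Γ] [LinearOrder Γ]
  [IsOrderedAddMonoid Γ] {k : Type*} [Field k] {D : Type*} [AddCommGroup D]
  (P : PreDiffeoValued p K Γ k D)

theorem v_one : P.v 1 = 0 := by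
  have hv := P.v_mul 1 1
  rw [mul_one] at hv
  lift P.v 1 to Γ using fun h => one_ne_zero ((P.v_eq_top_iff 1).mp h) with g
  exact_mod_cast left_eq_add.mp (by exact_mod_cast hv : g = g + g)

def toAddValuation : AddValuation K (WithTop Γ) :=
  AddValuation.of P.v ((P.v_eq_top_iff 0).mpr rfl) P.v_one P.v_add P.v_mul

theorem phi_zero : P.phi 0 = 0 :=
  (AddMonoidHom.mk' P.phi P.phi_add).map_zero

theorem mem_O_of_mem_Q {q : K} (hq : q ∈ P.Q) : q ∈ P.O :=
  P.R_le_O hq.1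

theorem pi_eq_zero_of_mem_Q {q : K} (hq : q ∈ P.Q) : P.pi q = 0 :=
  (P.pi_eq_zero_iff q (P.mem_O_of_mem_Q hq)).mpr hq

theorem mul_mem_Q {a q : K} (ha : a ∈ P.R) (hq : q ∈ P.Q) (hvq : 0 < P.v q) : a * q ∈ P.Q := by
  refine ⟨mul_mem ha hq.1, ?_⟩
  rw [P.d_leibniz a ha q hq.1, hq.2, (P.res_eq_zero_iff q (P.mem_O_of_mem_Q hq)).mpr hvq]
  simp

variable {P}

theorem IsDense.exists_mem_Q_v_eq (hdense : P.IsDense) {γ : Γ} (hγ : 0 ≤ γ) :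
    ∃ q ∈ P.Q, P.v q = γ := by
  obtain ⟨b, hb⟩ := P.v_surj γ
  obtain ⟨q, hq, hlt⟩ := hdense b ((P.mem_O_iff b).mpr (hb ▸ WithTop.coe_nonneg.mpr hγ)) γ
  refine ⟨q, hq, ?_⟩
  rw [← hb] at hlt ⊢
  rw [← sub_sub_cancel b q]
  exact P.toAddValuation.map_sub_eq_of_lt_left hlt

theorem IsDense.exists_pos (hdense : P.IsDense) : ∃ γ : Γ, 0 < γ := by
  -- otherwise density puts all of `O` into `Q = ker π`, although `π` hits `φ 1 ≠ 0`
  by_contra! hΓ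
  obtain ⟨b, hb, hpi⟩ := P.pi_surjective (P.phi 1)
  obtain ⟨q, hq, hlt⟩ := hdense b hb 0
  have hbq : b - q = 0 := by
    rw [← P.v_eq_top_iff]
    induction h : P.v (b - q) with
    | top => rfl
    | coe g => rw [h] at hlt; exact absurd (WithTop.coe_lt_coe.mp hlt) (hΓ g).not_gt
  rw [sub_eq_zero.mp hbq, P.pi_eq_zero_of_mem_Q hq, ← P.phi_zero] at hpi
  exact one_ne_zero (P.phi_injective hpi).symm

theorem IsDense.exists_pi_eq_v_gt (hdense : P.IsDense) (z : D) (γ : Γ) :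
    ∃ c ∈ P.O, P.pi c = z ∧ (γ : WithTop Γ) < P.v c := by
  obtain ⟨b, hb, rfl⟩ := P.pi_surjective z
  obtain ⟨q, hq, hlt⟩ := hdense b hb γ
  have hqO := P.mem_O_of_mem_Q hq
  refine ⟨b - q, sub_mem hb hqO, ?_, hlt⟩
  have := P.pi_add (b - q) (sub_mem hb hqO) q hqO
  rwa [sub_add_cancel, P.pi_eq_zero_of_mem_Q hq, add_zero, eq_comm] at this

end PreDiffeoValued

namespace PreDiffeoValuedS

variable {p : ℕ} {K : Type*} [Field K] {Γ : Type*} [AddCommGroup Γ] [LinearOrder Γ]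
  [IsOrderedAddMonoid Γ] {k : Type*} [Field k] {D : Type*} [AddCommGroup D]
  (P : PreDiffeoValuedS p K Γ k D)

theorem notMem_R_of_val_pi_neg {x : K} (h : P.val (P.pi x) < 0) : x ∉ P.R := fun hx =>
  h.not_ge ((P.val_nonneg_iff _).mpr ⟨P.d x, (P.pi_eq_phi_d x hx).symm⟩)

theorem smul_eq_zero_of_pos {a : K} (ha : a ∈ P.O) {x : D} (h : 0 < P.v a + P.val x) :
    P.smul a x = 0 :=
  (P.val_eq_top_iff _).mp (P.val_smul_of_pos a ha x h)

theorem mul_notMem_R_of_mem_Q {q x : K} (hq : q ∈ P.Q) (hx : x ∈ P.O)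
    (h : P.v q + P.val (P.pi x) < 0) : q * x ∉ P.R := by
  apply P.notMem_R_of_val_pi_neg
  rwa [P.pi_qsmul q hq.1 hq.2 x hx, P.val_smul_of_nonpos q (P.mem_O_of_mem_Q hq) _ h.le]

theorem mul_sq_mem_R {q c : K} (hq : q ∈ P.Q) (hc : c ∈ P.O)
    (h : 0 < P.v (q * c) + P.val (P.pi c)) : q * c ^ 2 ∈ P.R := by
  by_cases hp : p = 2
  · exact mul_mem hq.1 (P.char_two_sq hp c hc).1
  have hqO := P.mem_O_of_mem_Q hq
  have hqc : P.smul q (P.smul c (P.pi c)) = 0 := by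
    rw [← P.mul_smul q hqO c hc]
    exact P.smul_eq_zero_of_pos (mul_mem hqO hc) h
  have hpi : P.pi (q * c ^ 2) = 0 := by
    rw [sq, P.pi_qsmul q hq.1 hq.2 _ (mul_mem hc hc), P.char_odd_pi hp c hc c hc,
      P.smul_add q hqO, hqc, add_zero]
  exact ((P.pi_eq_zero_iff _ (mul_mem hqO (pow_mem hc 2))).mp hpi).1

end PreDiffeoValuedS

theorem exists_product_in_aR_with_factors_not_in_R_general
    {p : ℕ} {K : Type*} [Field K]
    {Γ : Type*} [AddCommGroup Γ] [LinearOrder Γ] [IsOrderedAddMonoid Γ]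
    {k : Type*} [Field k] {D : Type*} [AddCommGroup D]
    (P : PreDiffeoValuedS p K Γ k D)
    (hdense : P.toPreDiffeoValued.IsDense) :
    ∀ a ∈ P.R, a ≠ 0 →
      ∃ x y : K, (∃ r ∈ P.R, x * y = a * r) ∧ x ∉ P.R ∧ y ∉ P.R := by
  intro a haR ha0
  obtain ⟨ε, hε⟩ := hdense.exists_pos
  obtain ⟨ga, hga⟩ := WithTop.ne_top_iff_exists.mp (mt (P.v_eq_top_iff a).mp ha0)
  have hga0 : 0 ≤ ga := WithTop.coe_nonneg.mp (hga ▸ (P.mem_O_iff a).mp (P.R_le_O haR))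
  obtain ⟨z, hz⟩ := P.val_unbounded (-(ga + ε + ε))
  obtain ⟨δ, hδ, hδle⟩ := WithTop.le_coe_iff.mp hz
  obtain ⟨c, hc, rfl, hvc⟩ := hdense.exists_pi_eq_v_gt z (-(ε + δ))
  obtain ⟨q, hq, hvq⟩ := hdense.exists_mem_Q_v_eq hε.le
  have haq : a * q ∈ P.Q := P.mul_mem_Q haR hq (hvq ▸ WithTop.coe_pos.mpr hε)
  have hy : ga + ε + δ < 0 := calc
    ga + ε + δ ≤ ga + ε + -(ga + ε + ε) := by gcongr
    _ = -ε := by abel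
    _ < 0 := neg_lt_zero.mpr hε
  have hx : δ < 0 := (le_add_of_nonneg_left (add_nonneg hga0 hε.le)).trans_lt hy
  have hr : 0 < P.v (q * c) + P.val (P.pi c) := by
    rw [P.v_mul, hvq, hδ, add_right_comm, ← WithTop.coe_add]
    have := WithTop.add_lt_add_left (WithTop.coe_ne_top (a := ε + δ)) hvc
    rwa [← WithTop.coe_add, add_neg_cancel, WithTop.coe_zero] at this
  refine ⟨c, a * q * c, ⟨q * c ^ 2, P.mul_sq_mem_R hq hc hr, by ring⟩,
    P.notMem_R_of_val_pi_neg ?_, P.mul_notMem_R_of_mem_Q haq hc ?_⟩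
  · rw [hδ]
    exact_mod_cast hx
  · rw [P.v_mul, ← hga, hvq, hδ]
    exact_mod_cast hy

/-- If the pre-diffeo-valued field structure is dense, then for every
nonzero `a ∈ R` there exist `x, y ∈ K` with `x·y ∈ a·R`, `x ∉ R` and `y ∉ R`.  (Hence
the ring topology on `K` with the nonzero principal ideals `aR` as a neighborhood basis
of `0` fails the defining axiom of a V-topology.) -/
theorem exists_product_in_aR_with_factors_not_in_R
    {p : ℕ} (hp : p.Prime) {K : Type*} [Field K] [CharP K p]
    {Γ : Type*} [AddCommGroup Γ] [LinearOrder Γ] [IsOrderedAddMonoid Γ]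
    {k : Type*} [Field k] {D : Type*} [AddCommGroup D]
    (P : PreDiffeoValuedS p K Γ k D)
    (hdense : P.toPreDiffeoValued.IsDense) :
    ∀ a ∈ P.R, a ≠ 0 →
      ∃ x y : K, (∃ r ∈ P.R, x * y = a * r) ∧ x ∉ P.R ∧ y ∉ P.R :=
  exists_product_in_aR_with_factors_not_in_R_general P hdense
end

section
/- For every b ∈ K with b ∉ S there exists q ∈ K algebraic over F_p such that (b − q)⁻¹ ∈ S. -/
theorem algebraicOverPrime_iff_isAlgebraic {p : ℕ} {K : Type*} [Field K] [CharP K p]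
    [Algebra (ZMod p) K] {q : K} : AlgebraicOverPrime p q ↔ IsAlgebraic (ZMod p) q := by
  rw [AlgebraicOverPrime, IsAlgebraic,
    Subsingleton.elim (ZMod.castHom dvd_rfl K) (algebraMap (ZMod p) K)]
  simp only [Polynomial.aeval_def]

theorem Fintype.exists_forall_not_of_subsingleton {ι κ : Type*} [Fintype ι] [Fintype κ]
    (hcard : Fintype.card ι ≤ Fintype.card κ) (r : ι → κ → Prop)
    (hr : ∀ i, {j | r i j}.Subsingleton) (i₀ : ι) (hi₀ : ∀ j, ¬ r i₀ j) :
    ∃ j, ∀ i, ¬ r i j := by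
  by_contra! h
  choose g hg using h
  have hg_inj : Function.Injective g := fun j₁ j₂ h => hr (g j₁) (hg j₁) (h ▸ hg j₂)
  have hg_not_surj : ¬ Function.Surjective g := fun h => hi₀ _ ((h i₀).choose_spec ▸ hg _)
  exact (Fintype.card_lt_of_injective_not_surjective g hg_inj hg_not_surj).not_ge hcard

namespace ValuationSubring

variable {K : Type*} [Field K] (A : ValuationSubring K)

theorem mem_of_isIntegral_int {x : K} (hx : IsIntegral ℤ x) : x ∈ A := by
  obtain ⟨y, rfl⟩ := IsIntegrallyClosed.isIntegral_iff.mp (hx.tower_top (A := A))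
  exact y.2

theorem mem_of_isIntegral_zmod {n : ℕ} [Algebra (ZMod n) K] {x : K}
    (hx : IsIntegral (ZMod n) x) : x ∈ A := by
  have : Algebra.IsIntegral ℤ (ZMod n) := Algebra.isIntegral_of_surjective ZMod.intCast_surjective
  exact A.mem_of_isIntegral_int (isIntegral_trans x hx)

theorem notMem_nonunits_of_isIntegral_zmod {p : ℕ} [Fact p.Prime] [Algebra (ZMod p) K] {x : K}
    (hx : IsIntegral (ZMod p) x) (hx0 : x ≠ 0) : x ∉ A.nonunits := by
  rw [A.mem_nonunits_iff_or, not_or, not_not]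
  exact ⟨hx0, A.mem_of_isIntegral_zmod hx.inv⟩

theorem sub_mem_nonunits_of_inv_sub_notMem {b x y : K} (hx : (b - x)⁻¹ ∉ A)
    (hy : (b - y)⁻¹ ∉ A) : y - x ∈ A.nonunits := by
  rw [show y - x = (b - x) - (b - y) by ring]
  exact sub_mem (A.mem_nonunits_iff_or.mpr (.inr hx)) (A.mem_nonunits_iff_or.mpr (.inr hy))

theorem subsingleton_setOf_inv_sub_notMem {p : ℕ} [Fact p.Prime] [Algebra (ZMod p) K]
    {ι : Type*} {f : ι → K} (hf : Function.Injective f)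
    (hint : ∀ j, IsIntegral (ZMod p) (f j))
    (b : K) : {j | (b - f j)⁻¹ ∉ A}.Subsingleton := by
  intro j₁ hj₁ j₂ hj₂
  by_contra hne
  exact A.notMem_nonunits_of_isIntegral_zmod ((hint j₂).sub (hint j₁))
    (sub_ne_zero.mpr (hf.ne (Ne.symm hne))) (A.sub_mem_nonunits_of_inv_sub_notMem hj₁ hj₂)

theorem inv_sub_mem_of_notMem {b x : K} (hb : b ∉ A) (hx : x ∈ A) : (b - x)⁻¹ ∈ A :=
  (A.mem_or_inv_mem (b - x)).resolve_left fun h => hb (by simpa using A.add_mem _ _ h hx)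

end ValuationSubring

theorem exists_algebraic_shift_inv_mem_multivaluation_general
    {p : ℕ} (hp : p.Prime) {K : Type*} [Field K] [CharP K p]
    (n : ℕ)
    (Os : Fin n → Subring K)
    (hOs : ∀ i, ∀ x : K, x ≠ 0 → x ∈ Os i ∨ x⁻¹ ∈ Os i)
    (f : Fin n → K) (hfinj : Function.Injective f)
    (hfalg : ∀ i, AlgebraicOverPrime p (f i)) :
    ∀ b : K, ¬ (∀ i, b ∈ Os i) →
      ∃ q : K, AlgebraicOverPrime p q ∧ ∀ i, (b - q)⁻¹ ∈ Os i := by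
  intro b hb
  obtain ⟨i₀, hi₀⟩ := not_forall.mp hb
  have := Fact.mk hp
  let := ZMod.algebra K p
  let A (i : Fin n) : ValuationSubring K := .ofSubring (Os i) fun x =>
    (eq_or_ne x 0).elim (fun h => .inl (h ▸ zero_mem _)) (hOs i x)
  have hint (j : Fin n) : IsIntegral (ZMod p) (f j) :=
    (algebraicOverPrime_iff_isAlgebraic.mp (hfalg j)).isIntegral
  obtain ⟨j, hj⟩ := Fintype.exists_forall_not_of_subsingleton le_rfl
    (fun i j => (b - f j)⁻¹ ∉ Os i)
    (fun i => (A i).subsingleton_setOf_inv_sub_notMem hfinj hint b)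
    i₀ fun j hj => hj <|
      (A i₀).inv_sub_mem_of_notMem hi₀ ((A i₀).mem_of_isIntegral_zmod (hint j))
  exact ⟨f j, hfalg j, fun i => not_not.mp (hj i)⟩

/-- Let `p` be a prime, `K` a field of characteristic `p`, `n ≥ 1`,
`O₁, …, Oₙ` valuation subrings of `K` and `S = O₁ ∩ ⋯ ∩ Oₙ`.  If `K` contains at least
`n` pairwise distinct elements algebraic over `𝔽_p`, then for every `b ∈ K` with
`b ∉ S` there exists `q ∈ K` algebraic over `𝔽_p` such that `(b - q)⁻¹ ∈ S`. -/
theorem exists_algebraic_shift_inv_mem_multivaluation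
    {p : ℕ} (hp : p.Prime) {K : Type*} [Field K] [CharP K p]
    (n : ℕ) (hn : 1 ≤ n)
    (Os : Fin n → Subring K)
    (hOs : ∀ i, ∀ x : K, x ≠ 0 → x ∈ Os i ∨ x⁻¹ ∈ Os i)
    (f : Fin n → K) (hfinj : Function.Injective f)
    (hfalg : ∀ i, AlgebraicOverPrime p (f i)) :
    ∀ b : K, ¬ (∀ i, b ∈ Os i) →
      ∃ q : K, AlgebraicOverPrime p q ∧ ∀ i, (b - q)⁻¹ ∈ Os i :=
  exists_algebraic_shift_inv_mem_multivaluation_general hp n Os hOs f hfinj hfalg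
end

section
/- Assume the pre-diffeo-valued field structure is dense. Then for all a, b, c ∈ K, the Q-submodule Qa + Qb + Qc of K is generated by a two-element subset of {a, b, c}; that is, Qa + Qb + Qc equals one of Qa + Qb, Qa + Qc, or Qb + Qc. -/
/-! Scaling by an element of minimal valuation turns the three elements into `1, t, s` with
`t, s ∈ O`. Since `D` is totally ordered by divisibility, `π s = α • π t` (or the other way
round) for some `α ∈ O`. Density replaces `α` by some `q ∈ Q` without changing `α • π t`:
`(α - q) • π t` has secondary valuation `> 0`, hence vanishes. Then `π (s - q t) = 0`, so
`s - q t ∈ Q` and `s ∈ Q + Q t`. -/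

section LinComb

variable {R : Type*} [CommSemiring R]

def linComb₂ (S : Set R) (a b : R) : Set R :=
  {x | ∃ q₁ ∈ S, ∃ q₂ ∈ S, x = q₁ * a + q₂ * b}

def linComb₃ (S : Set R) (a b c : R) : Set R :=
  {x | ∃ q₁ ∈ S, ∃ q₂ ∈ S, ∃ q₃ ∈ S, x = q₁ * a + q₂ * b + q₃ * c}

theorem linComb₂_comm (S : Set R) (a b : R) : linComb₂ S a b = linComb₂ S b a := by
  ext x
  constructor <;> rintro ⟨q₁, h₁, q₂, h₂, rfl⟩ <;> exact ⟨q₂, h₂, q₁, h₁, add_comm _ _⟩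

theorem linComb₃_rotate (S : Set R) (a b c : R) : linComb₃ S a b c = linComb₃ S b c a := by
  ext x
  constructor
  · rintro ⟨q₁, h₁, q₂, h₂, q₃, h₃, rfl⟩
    exact ⟨q₂, h₂, q₃, h₃, q₁, h₁, by ring⟩
  · rintro ⟨q₁, h₁, q₂, h₂, q₃, h₃, rfl⟩
    exact ⟨q₃, h₃, q₁, h₁, q₂, h₂, by ring⟩

theorem mul_mem_linComb₂ {S : Set R} {a b x : R} (m : R) (h : x ∈ linComb₂ S a b) :
    m * x ∈ linComb₂ S (m * a) (m * b) := by
  obtain ⟨q₁, h₁, q₂, h₂, rfl⟩ := h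
  exact ⟨q₁, h₁, q₂, h₂, by ring⟩

variable (S : Subsemiring R)

theorem linComb₃_eq_linComb₂_of_mem {a b c : R} (h : c ∈ linComb₂ S a b) :
    linComb₃ S a b c = linComb₂ S a b := by
  obtain ⟨q, hq, q', hq', rfl⟩ := h
  ext x
  constructor
  · rintro ⟨q₁, h₁, q₂, h₂, q₃, h₃, rfl⟩
    exact ⟨q₁ + q₃ * q, add_mem h₁ (mul_mem h₃ hq), q₂ + q₃ * q', add_mem h₂ (mul_mem h₃ hq'),
      by ring⟩
  · rintro ⟨q₁, h₁, q₂, h₂, rfl⟩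
    exact ⟨q₁, h₁, q₂, h₂, 0, zero_mem S, by ring⟩

theorem linComb₃_eq_linComb₂_or {a b c : R}
    (h : c ∈ linComb₂ S a b ∨ b ∈ linComb₂ S a c ∨ a ∈ linComb₂ S b c) :
    linComb₃ S a b c = linComb₂ S a b ∨ linComb₃ S a b c = linComb₂ S a c ∨
      linComb₃ S a b c = linComb₂ S b c := by
  rcases h with hc | hb | ha
  · exact Or.inl (linComb₃_eq_linComb₂_of_mem S hc)
  · rw [linComb₂_comm] at hb
    rw [linComb₃_rotate, linComb₃_rotate, linComb₃_eq_linComb₂_of_mem S hb, linComb₂_comm]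
    exact Or.inr (Or.inl rfl)
  · rw [linComb₃_rotate, linComb₃_eq_linComb₂_of_mem S ha]
    exact Or.inr (Or.inr rfl)

end LinComb

theorem WithTop.exists_forall_coe_lt_pos_add {Γ : Type*} [AddCommGroup Γ] [LinearOrder Γ]
    [IsOrderedAddMonoid Γ] (z : WithTop Γ) :
    ∃ γ : Γ, ∀ w : WithTop Γ, (γ : WithTop Γ) < w → 0 < w + z := by
  induction z using WithTop.recTopCoe with
  | top => exact ⟨0, fun w _ => by simp⟩
  | coe g =>
    refine ⟨-g, fun w hw => ?_⟩
    have := WithTop.add_lt_add_right (WithTop.coe_ne_top (a := g)) hw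
    rwa [← WithTop.coe_add, neg_add_cancel, WithTop.coe_zero] at this

namespace PreDiffeoValued

variable {p : ℕ} {K : Type*} [Field K] {Γ : Type*} [AddCommGroup Γ] [LinearOrder Γ]
  [IsOrderedAddMonoid Γ] {k : Type*} [Field k] {D : Type*} [AddCommGroup D]
  (P : PreDiffeoValued p K Γ k D)

theorem d_zero : P.d 0 = 0 := by
  simpa using P.d_add 0 (zero_mem P.R) 0 (zero_mem P.R)

theorem d_one : P.d 1 = 0 := by
  simpa [P.res_one] using P.d_leibniz 1 (one_mem P.R) 1 (one_mem P.R)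

theorem d_neg {x : K} (hx : x ∈ P.R) : P.d (-x) = -P.d x := by
  have h := P.d_add x hx (-x) (neg_mem hx)
  rw [add_neg_cancel, d_zero] at h
  exact (neg_eq_of_add_eq_zero_right h.symm).symm

def QSubring : Subring K where
  carrier := P.Q
  zero_mem' := ⟨zero_mem P.R, P.d_zero⟩
  one_mem' := ⟨one_mem P.R, P.d_one⟩
  add_mem' {x y} hx hy := ⟨add_mem hx.1 hy.1, by rw [P.d_add x hx.1 y hy.1, hx.2, hy.2, add_zero]⟩
  mul_mem' {x y} hx hy :=
    ⟨mul_mem hx.1 hy.1, by rw [P.d_leibniz x hx.1 y hy.1, hx.2, hy.2, mul_zero, mul_zero, add_zero]⟩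
  neg_mem' {x} hx := ⟨neg_mem hx.1, by rw [P.d_neg hx.1, hx.2, neg_zero]⟩

theorem Q_subset_O : P.Q ⊆ P.O := fun _ hx => P.R_le_O hx.1

theorem div_mem_O_of_v_le {m x : K} (hm : m ≠ 0) (h : P.v m ≤ P.v x) : x / m ∈ P.O := by
  have hvm : P.v m ≠ ⊤ := fun h => hm ((P.v_eq_top_iff m).mp h)
  rw [← div_mul_cancel₀ x hm, P.v_mul] at h
  rw [P.mem_O_iff]
  exact WithTop.le_of_add_le_add_right hvm (by rwa [zero_add])

theorem sub_mem_Q_of_pi_eq {x y : K} (hx : x ∈ P.O) (hy : y ∈ P.O) (h : P.pi x = P.pi y) :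
    x - y ∈ P.Q := by
  have hsum := P.pi_add (x - y) (sub_mem hx hy) y hy
  rw [sub_add_cancel, h, right_eq_add] at hsum
  exact (P.pi_eq_zero_iff _ (sub_mem hx hy)).mp hsum

end PreDiffeoValued

namespace PreDiffeoValuedS

variable {p : ℕ} {K : Type*} [Field K] {Γ : Type*} [AddCommGroup Γ] [LinearOrder Γ]
  [IsOrderedAddMonoid Γ] {k : Type*} [Field k] {D : Type*} [AddCommGroup D]
  (P : PreDiffeoValuedS p K Γ k D)

theorem exists_Q_smul_eq_smul (hdense : P.toPreDiffeoValued.IsDense) {a : K} (ha : a ∈ P.O)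
    (x : D) :
    ∃ q ∈ P.Q, P.smul q x = P.smul a x := by
  obtain ⟨γ, hγ⟩ := WithTop.exists_forall_coe_lt_pos_add (P.val x)
  obtain ⟨q, hq, hv⟩ := hdense a ha γ
  have hqO := P.Q_subset_O hq
  have hzero : P.smul (a - q) x = 0 :=
    (P.val_eq_top_iff _).mp (P.val_smul_of_pos _ (sub_mem ha hqO) x (hγ _ hv))
  refine ⟨q, hq, ?_⟩
  rw [← sub_add_cancel a q, P.add_smul _ (sub_mem ha hqO) q hqO, hzero, zero_add]


theorem mem_linComb₂_one_of_pi_eq_smul (hdense : P.toPreDiffeoValued.IsDense) {s t α : K}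
    (hs : s ∈ P.O) (ht : t ∈ P.O) (hα : α ∈ P.O) (h : P.pi s = P.smul α (P.pi t)) :
    s ∈ linComb₂ P.Q 1 t := by
  obtain ⟨q, hq, hqα⟩ := P.exists_Q_smul_eq_smul hdense hα (P.pi t)
  have hdiff : s - q * t ∈ P.Q :=
    P.sub_mem_Q_of_pi_eq hs (mul_mem (P.Q_subset_O hq) ht)
      (by rw [h, ← hqα, P.pi_qsmul q hq.1 hq.2 t ht])
  exact ⟨s - q * t, hdiff, q, hq, by ring⟩

theorem mem_linComb₂_one_or (hdense : P.toPreDiffeoValued.IsDense) {s t : K}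
    (hs : s ∈ P.O) (ht : t ∈ P.O) : s ∈ linComb₂ P.Q 1 t ∨ t ∈ linComb₂ P.Q 1 s := by
  rcases P.total (P.pi s) (P.pi t) with ⟨α, hα, h⟩ | ⟨α, hα, h⟩
  · exact Or.inl (P.mem_linComb₂_one_of_pi_eq_smul hdense hs ht hα h)
  · exact Or.inr (P.mem_linComb₂_one_of_pi_eq_smul hdense ht hs hα h)

theorem mem_linComb₂_or_of_v_le (hdense : P.toPreDiffeoValued.IsDense) {m x y : K}
    (hx : P.v m ≤ P.v x) (hy : P.v m ≤ P.v y) :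
    y ∈ linComb₂ P.Q m x ∨ x ∈ linComb₂ P.Q m y := by
  rcases eq_or_ne m 0 with rfl | hm
  · have hvm : P.v 0 = ⊤ := (P.v_eq_top_iff 0).mpr rfl
    have hy0 : y = 0 := (P.v_eq_top_iff y).mp (top_le_iff.mp (hvm ▸ hy))
    exact Or.inl ⟨0, P.QSubring.zero_mem, 0, P.QSubring.zero_mem, by simp [hy0]⟩
  · have hscaled := P.mem_linComb₂_one_or hdense (P.div_mem_O_of_v_le hm hy)
      (P.div_mem_O_of_v_le hm hx)
    refine hscaled.imp (fun h => ?_) (fun h => ?_) <;>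
      simpa [mul_div_cancel₀, hm] using mul_mem_linComb₂ m h

theorem mem_linComb₂_of_three (hdense : P.toPreDiffeoValued.IsDense) (a b c : K) :
    c ∈ linComb₂ P.Q a b ∨ b ∈ linComb₂ P.Q a c ∨ a ∈ linComb₂ P.Q b c := by
  have of_c_min (hca : P.v c ≤ P.v a) (hcb : P.v c ≤ P.v b) :
      c ∈ linComb₂ P.Q a b ∨ b ∈ linComb₂ P.Q a c ∨ a ∈ linComb₂ P.Q b c := by
    rw [linComb₂_comm _ a c, linComb₂_comm _ b c]
    exact Or.inr (P.mem_linComb₂_or_of_v_le hdense hca hcb)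
  rcases le_total (P.v a) (P.v b) with hab | hba
  · rcases le_total (P.v a) (P.v c) with hac | hca
    · exact (P.mem_linComb₂_or_of_v_le hdense hab hac).imp_right Or.inl
    · exact of_c_min hca (hca.trans hab)
  · rcases le_total (P.v b) (P.v c) with hbc | hcb
    · rw [linComb₂_comm _ a b]
      exact (P.mem_linComb₂_or_of_v_le hdense hba hbc).imp_right Or.inr
    · exact of_c_min (hcb.trans hba) hcb

end PreDiffeoValuedS

theorem Q_submodule_three_generated_by_two_general
    {p : ℕ} {K : Type*} [Field K]
    {Γ : Type*} [AddCommGroup Γ] [LinearOrder Γ] [IsOrderedAddMonoid Γ]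
    {k : Type*} [Field k] {D : Type*} [AddCommGroup D]
    (P : PreDiffeoValuedS p K Γ k D)
    (hdense : P.toPreDiffeoValued.IsDense) :
    ∀ a b c : K,
      ({x : K | ∃ q₁ ∈ P.Q, ∃ q₂ ∈ P.Q, ∃ q₃ ∈ P.Q, x = q₁ * a + q₂ * b + q₃ * c} =
          {x : K | ∃ q₁ ∈ P.Q, ∃ q₂ ∈ P.Q, x = q₁ * a + q₂ * b}) ∨
      ({x : K | ∃ q₁ ∈ P.Q, ∃ q₂ ∈ P.Q, ∃ q₃ ∈ P.Q, x = q₁ * a + q₂ * b + q₃ * c} =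
          {x : K | ∃ q₁ ∈ P.Q, ∃ q₂ ∈ P.Q, x = q₁ * a + q₂ * c}) ∨
      ({x : K | ∃ q₁ ∈ P.Q, ∃ q₂ ∈ P.Q, ∃ q₃ ∈ P.Q, x = q₁ * a + q₂ * b + q₃ * c} =
          {x : K | ∃ q₁ ∈ P.Q, ∃ q₂ ∈ P.Q, x = q₁ * b + q₂ * c}) :=
  fun a b c =>
    linComb₃_eq_linComb₂_or P.QSubring.toSubsemiring (P.mem_linComb₂_of_three hdense a b c)

/-- If the pre-diffeo-valued field structure is dense, then for all
`a, b, c ∈ K` the `Q`-submodule `Qa + Qb + Qc` of `K` is generated by a two-element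
subset of `{a, b, c}`: it equals one of `Qa + Qb`, `Qa + Qc` or `Qb + Qc`. -/
theorem Q_submodule_three_generated_by_two
    {p : ℕ} (hp : p.Prime) {K : Type*} [Field K] [CharP K p]
    {Γ : Type*} [AddCommGroup Γ] [LinearOrder Γ] [IsOrderedAddMonoid Γ]
    {k : Type*} [Field k] {D : Type*} [AddCommGroup D]
    (P : PreDiffeoValuedS p K Γ k D)
    (hdense : P.toPreDiffeoValued.IsDense) :
    ∀ a b c : K,
      ({x : K | ∃ q₁ ∈ P.Q, ∃ q₂ ∈ P.Q, ∃ q₃ ∈ P.Q, x = q₁ * a + q₂ * b + q₃ * c} =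
          {x : K | ∃ q₁ ∈ P.Q, ∃ q₂ ∈ P.Q, x = q₁ * a + q₂ * b}) ∨
      ({x : K | ∃ q₁ ∈ P.Q, ∃ q₂ ∈ P.Q, ∃ q₃ ∈ P.Q, x = q₁ * a + q₂ * b + q₃ * c} =
          {x : K | ∃ q₁ ∈ P.Q, ∃ q₂ ∈ P.Q, x = q₁ * a + q₂ * c}) ∨
      ({x : K | ∃ q₁ ∈ P.Q, ∃ q₂ ∈ P.Q, ∃ q₃ ∈ P.Q, x = q₁ * a + q₂ * b + q₃ * c} =
          {x : K | ∃ q₁ ∈ P.Q, ∃ q₂ ∈ P.Q, x = q₁ * b + q₂ * c}) :=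
  Q_submodule_three_generated_by_two_general P hdense
end

section
/- Assume the pre-diffeo-valued field structure is dense, and set I := Q ∩ M. Then: (1) the residue map res restricts to a surjective ring homomorphism Q → k with kernel I, inducing a ring isomorphism Q/I ≅ k; and (2) the map gres : R → k × k defined by gres(a) = (res(a), d(a)) is a surjective Q-module homomorphism with kernel I (where k × k is a Q-module via res acting coordinatewise), inducing a Q-module isomorphism R/I ≅ k². -/
/-! Density of `Q` in `O` with respect to `v` forces `res (Q) = res (O) = k`, since
elements that are `v`-close have equal residues. Shifting an `r₀ ∈ R` with prescribed `d r₀`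
by a suitable `q ∈ Q` then adjusts the residue without changing `d`. -/

namespace PreDiffeoValued

variable {p : ℕ} {K : Type*} [Field K] {Γ : Type*} [AddCommGroup Γ] [LinearOrder Γ]
  [IsOrderedAddMonoid Γ] {k : Type*} [Field k] {D : Type*} [AddCommGroup D]
  (P : PreDiffeoValued p K Γ k D)

theorem mem_O_of_mem_R {x : K} (hx : x ∈ P.R) : x ∈ P.O := P.R_le_O hx

theorem res_eq_of_pos_v_sub {x y : K} (hx : x ∈ P.O) (hy : y ∈ P.O) (hxy : 0 < P.v (x - y)) :
    P.res x = P.res y := by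
  have hsub : x - y ∈ P.O := P.O.sub_mem hx hy
  calc P.res x = P.res (y + (x - y)) := by rw [add_sub_cancel]
    _ = P.res y + P.res (x - y) := P.res_add y hy (x - y) hsub
    _ = P.res y := by rw [(P.res_eq_zero_iff _ hsub).2 hxy, add_zero]

theorem res_eq_zero_and_d_eq_zero_iff {r : K} (hr : r ∈ P.R) :
    P.res r = 0 ∧ P.d r = 0 ↔ r ∈ P.Q ∩ {x : K | 0 < P.v x} := by
  rw [P.res_eq_zero_iff r (P.mem_O_of_mem_R hr)]
  exact ⟨fun ⟨hv, hd⟩ => ⟨⟨hr, hd⟩, hv⟩, fun ⟨hq, hv⟩ => ⟨hv, hq.2⟩⟩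

theorem res_mul_of_mem_Q {q r : K} (hq : q ∈ P.Q) (hr : r ∈ P.R) :
    P.res (q * r) = P.res q * P.res r :=
  P.res_mul q (P.mem_O_of_mem_R hq.1) r (P.mem_O_of_mem_R hr)

theorem d_mul_of_mem_Q {q r : K} (hq : q ∈ P.Q) (hr : r ∈ P.R) :
    P.d (q * r) = P.res q * P.d r := by
  rw [P.d_leibniz q hq.1 r hr, hq.2, mul_zero, add_zero]

variable {P}

theorem IsDense.exists_mem_Q_res_eq (hdense : P.IsDense) (z : k) :
    ∃ q ∈ P.Q, P.res q = z := by
  obtain ⟨x, hxO, rfl⟩ := P.res_surjective z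
  obtain ⟨q, hq, hv⟩ := hdense x hxO 0
  exact ⟨q, hq, (P.res_eq_of_pos_v_sub hxO (P.mem_O_of_mem_R hq.1) (mod_cast hv)).symm⟩

theorem IsDense.exists_mem_R_res_eq_d_eq (hdense : P.IsDense) (z w : k) :
    ∃ r ∈ P.R, P.res r = z ∧ P.d r = w := by
  obtain ⟨r₀, hr₀, rfl⟩ := P.d_surjective w
  obtain ⟨q, hq, hqres⟩ := hdense.exists_mem_Q_res_eq (z - P.res r₀)
  refine ⟨r₀ + q, P.R.add_mem hr₀ hq.1, ?_, ?_⟩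
  · rw [P.res_add r₀ (P.mem_O_of_mem_R hr₀) q (P.mem_O_of_mem_R hq.1), hqres, add_sub_cancel]
  · rw [P.d_add r₀ hr₀ q hq.1, hq.2, add_zero]

end PreDiffeoValued

theorem res_and_gres_surjective_with_kernel_I_general
    {p : ℕ} {K : Type*} [Field K]
    {Γ : Type*} [AddCommGroup Γ] [LinearOrder Γ] [IsOrderedAddMonoid Γ]
    {k : Type*} [Field k] {D : Type*} [AddCommGroup D]
    (P : PreDiffeoValued p K Γ k D)
    (hdense : P.IsDense) :
    -- (1) `res|_Q : Q → k` is surjective with kernel `I = Q ∩ M`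
    ((∀ z : k, ∃ q ∈ P.Q, P.res q = z) ∧
      (∀ q ∈ P.Q, (P.res q = 0 ↔ q ∈ P.Q ∩ {x : K | 0 < P.v x}))) ∧
    -- (2) `gres : R → k × k`, `a ↦ (res a, d a)`, is a surjective `Q`-module
    -- homomorphism with kernel `I = Q ∩ M`
    ((∀ q ∈ P.Q, ∀ r ∈ P.R,
        P.res (q * r) = P.res q * P.res r ∧ P.d (q * r) = P.res q * P.d r) ∧
      (∀ z w : k, ∃ r ∈ P.R, P.res r = z ∧ P.d r = w) ∧
      (∀ r ∈ P.R, ((P.res r, P.d r) = ((0 : k), (0 : k)) ↔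
        r ∈ P.Q ∩ {x : K | 0 < P.v x}))) := by
  refine ⟨⟨hdense.exists_mem_Q_res_eq, fun q hq => ?_⟩,
    fun q hq r hr => ⟨P.res_mul_of_mem_Q hq hr, P.d_mul_of_mem_Q hq hr⟩,
    hdense.exists_mem_R_res_eq_d_eq, fun r hr => ?_⟩
  · rw [← P.res_eq_zero_and_d_eq_zero_iff hq.1, and_iff_left hq.2]
  · rw [Prod.mk.injEq]
    exact P.res_eq_zero_and_d_eq_zero_iff hr

/-- Assume the pre-diffeo-valued field structure is dense and set
`I := Q ∩ M`.  Then (1) `res` restricts to a surjective ring homomorphism `Q → k` with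
kernel `I` (inducing a ring isomorphism `Q/I ≅ k`), and (2) the map
`gres : R → k × k`, `gres a = (res a, d a)` is a surjective `Q`-module homomorphism with
kernel `I` (inducing a `Q`-module isomorphism `R/I ≅ k²`). -/
theorem res_and_gres_surjective_with_kernel_I
    {p : ℕ} (hp : p.Prime) {K : Type*} [Field K] [CharP K p]
    {Γ : Type*} [AddCommGroup Γ] [LinearOrder Γ] [IsOrderedAddMonoid Γ]
    {k : Type*} [Field k] {D : Type*} [AddCommGroup D]
    (P : PreDiffeoValued p K Γ k D)
    (hdense : P.IsDense) :
    -- (1) `res|_Q : Q → k` is surjective with kernel `I = Q ∩ M`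
    ((∀ z : k, ∃ q ∈ P.Q, P.res q = z) ∧
      (∀ q ∈ P.Q, (P.res q = 0 ↔ q ∈ P.Q ∩ {x : K | 0 < P.v x}))) ∧
    -- (2) `gres : R → k × k`, `a ↦ (res a, d a)`, is a surjective `Q`-module
    -- homomorphism with kernel `I = Q ∩ M`
    ((∀ q ∈ P.Q, ∀ r ∈ P.R,
        P.res (q * r) = P.res q * P.res r ∧ P.d (q * r) = P.res q * P.d r) ∧
      (∀ z w : k, ∃ r ∈ P.R, P.res r = z ∧ P.d r = w) ∧
      (∀ r ∈ P.R, ((P.res r, P.d r) = ((0 : k), (0 : k)) ↔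
        r ∈ P.Q ∩ {x : K | 0 < P.v x}))) :=
  res_and_gres_surjective_with_kernel_I_general P hdense
end

section
/- Assume the pre-diffeo-valued field structure is dense. Then for every a ∈ O with v(a) = 0 (i.e. a a unit of O), one has val(π(a)) = val(π(a⁻¹)). -/
/-!
Units of `O` act on `D` without changing `val`, so it suffices to write `π(a)` as a unit
multiple of `π(a⁻¹)`. In characteristic `2` this comes from `a² ∈ Q`:
`π(a) = π(a² · a⁻¹) = a² · π(a⁻¹)`.
In odd characteristic the Leibniz rule applied to `1 = a · a⁻¹`, together with `π(1) = 0`,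
gives `a · π(a⁻¹) = -(a⁻¹ · π(a))`.
-/

namespace PreDiffeoValued

variable {p : ℕ} {K : Type*} [Field K] {Γ : Type*} [AddCommGroup Γ] [LinearOrder Γ]
  [IsOrderedAddMonoid Γ] {k : Type*} [Field k] {D : Type*} [AddCommGroup D]
  (P : PreDiffeoValued p K Γ k D)

theorem ne_zero_of_v_eq_zero {a : K} (ha : P.v a = 0) : a ≠ 0 := by
  rintro rfl
  exact WithTop.top_ne_zero (((P.v_eq_top_iff 0).mpr rfl).symm.trans ha)

theorem v_inv_of_v_eq_zero {a : K} (ha : P.v a = 0) : P.v a⁻¹ = 0 := by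
  have h := P.v_mul a a⁻¹
  rwa [mul_inv_cancel₀ (P.ne_zero_of_v_eq_zero ha), P.v_one, ha, zero_add, eq_comm] at h

theorem inv_mem_O_of_v_eq_zero {a : K} (ha : P.v a = 0) : a⁻¹ ∈ P.O :=
  (P.mem_O_iff _).mpr (P.v_inv_of_v_eq_zero ha).ge

theorem v_eq_zero_of_mem_O_of_inv_mem_O {a : K} (ha0 : a ≠ 0) (ha : a ∈ P.O)
    (ha' : a⁻¹ ∈ P.O) : P.v a = 0 := by
  refine le_antisymm ?_ ((P.mem_O_iff a).mp ha)
  calc P.v a ≤ P.v a + P.v a⁻¹ := le_add_of_nonneg_right ((P.mem_O_iff _).mp ha')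
    _ = 0 := by rw [← P.v_mul, mul_inv_cancel₀ ha0, P.v_one]

theorem v_neg_one : P.v (-1) = 0 :=
  have h : (-1 : K) ∈ P.O := P.O.neg_mem P.O.one_mem
  P.v_eq_zero_of_mem_O_of_inv_mem_O (neg_ne_zero.mpr one_ne_zero) h (by rwa [inv_neg, inv_one])

theorem zero_smul (x : D) : P.smul 0 x = 0 := by
  have h := P.add_smul 0 P.O.zero_mem 0 P.O.zero_mem x
  rwa [add_zero, left_eq_add] at h

theorem smul_zero {a : K} (ha : a ∈ P.O) : P.smul a 0 = 0 := by
  have h := P.smul_add a ha 0 0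
  rwa [add_zero, left_eq_add] at h

theorem neg_one_smul (x : D) : P.smul (-1) x = -x := by
  have h := P.add_smul 1 P.O.one_mem (-1) (P.O.neg_mem P.O.one_mem) x
  rw [add_neg_cancel, P.zero_smul, P.one_smul] at h
  exact (neg_eq_of_add_eq_zero_right h.symm).symm

theorem pi_one : P.pi 1 = 0 := by
  rw [P.pi_eq_phi_d 1 P.R.one_mem, P.d_one, P.phi_zero]

theorem pi_eq_sq_smul_pi_inv (hp : p = 2) {a : K} (ha : a ∈ P.O) (ha0 : a ≠ 0)
    (ha' : a⁻¹ ∈ P.O) : P.pi a = P.smul (a ^ 2) (P.pi a⁻¹) := by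
  obtain ⟨hsqR, hdsq⟩ := P.char_two_sq hp a ha
  have h := P.pi_qsmul (a ^ 2) hsqR hdsq a⁻¹ ha'
  rwa [pow_two, mul_assoc, mul_inv_cancel₀ ha0, mul_one, ← pow_two] at h

theorem smul_pi_inv_eq_neg_smul_pi (hp : p ≠ 2) {a : K} (ha : a ∈ P.O) (ha0 : a ≠ 0)
    (ha' : a⁻¹ ∈ P.O) : P.smul a (P.pi a⁻¹) = -P.smul a⁻¹ (P.pi a) := by
  have h := P.char_odd_pi hp a ha a⁻¹ ha'
  rw [mul_inv_cancel₀ ha0, P.pi_one] at h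
  exact eq_neg_of_add_eq_zero_left h.symm

end PreDiffeoValued

namespace PreDiffeoValuedS

variable {p : ℕ} {K : Type*} [Field K] {Γ : Type*} [AddCommGroup Γ] [LinearOrder Γ]
  [IsOrderedAddMonoid Γ] {k : Type*} [Field k] {D : Type*} [AddCommGroup D]
  (P : PreDiffeoValuedS p K Γ k D)

theorem val_smul_of_v_eq_zero {a : K} (ha : a ∈ P.O) (hva : P.v a = 0) (x : D) :
    P.val (P.smul a x) = P.val x := by
  rcases P.val_nonpos_or_top x with hx | hx
  · rw [P.val_smul_of_nonpos a ha x (by rwa [hva, zero_add]), hva, zero_add]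
  · rw [(P.val_eq_top_iff x).mp hx, P.smul_zero ha]

theorem val_neg (x : D) : P.val (-x) = P.val x := by
  rw [← P.neg_one_smul, P.val_smul_of_v_eq_zero (P.O.neg_mem P.O.one_mem) P.v_neg_one]

end PreDiffeoValuedS

theorem val_pi_inv_eq_val_pi_general
    {p : ℕ} {K : Type*} [Field K]
    {Γ : Type*} [AddCommGroup Γ] [LinearOrder Γ] [IsOrderedAddMonoid Γ]
    {k : Type*} [Field k] {D : Type*} [AddCommGroup D]
    (P : PreDiffeoValuedS p K Γ k D) :
    ∀ a ∈ P.O, P.v a = 0 → P.val (P.pi a) = P.val (P.pi a⁻¹) := by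
  intro a ha hva
  have ha' := P.inv_mem_O_of_v_eq_zero hva
  have hva' := P.v_inv_of_v_eq_zero hva
  have ha0 := P.ne_zero_of_v_eq_zero hva
  by_cases hp : p = 2
  · rw [P.pi_eq_sq_smul_pi_inv hp ha ha0 ha', P.val_smul_of_v_eq_zero (pow_mem ha 2)]
    rw [pow_two, P.v_mul, hva, zero_add]
  · calc P.val (P.pi a) = P.val (P.smul a⁻¹ (P.pi a)) :=
          (P.val_smul_of_v_eq_zero ha' hva' _).symm
      _ = P.val (P.smul a (P.pi a⁻¹)) := by
        rw [P.smul_pi_inv_eq_neg_smul_pi hp ha ha0 ha', P.val_neg]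
      _ = P.val (P.pi a⁻¹) := P.val_smul_of_v_eq_zero ha hva _

/-- If the pre-diffeo-valued field structure is dense, then for every
unit `a` of `O` (i.e. `a ∈ O` with `v a = 0`) one has `val (π a) = val (π a⁻¹)`. -/
theorem val_pi_inv_eq_val_pi
    {p : ℕ} (hp : p.Prime) {K : Type*} [Field K] [CharP K p]
    {Γ : Type*} [AddCommGroup Γ] [LinearOrder Γ] [IsOrderedAddMonoid Γ]
    {k : Type*} [Field k] {D : Type*} [AddCommGroup D]
    (P : PreDiffeoValuedS p K Γ k D)
    (hdense : P.toPreDiffeoValued.IsDense) :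
    ∀ a ∈ P.O, P.v a = 0 → P.val (P.pi a) = P.val (P.pi a⁻¹) :=
  val_pi_inv_eq_val_pi_general P
end
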